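/- arXiv:2603.10464 — 4 statements merged into one kernel-verified Lean document; each statement's English description precedes it below -/
import Mathlib

section
/- Let (R, m) be a Noetherian local ring of Krull dimension one and M a finitely generated R-module. Then the following are equivalent: (1) h(M) < ∞; (2) ℓ_R(R/tr_R(M)) < ∞; (3) S⁻¹R is a direct summand of the S⁻¹R-module S⁻¹M, where S = R \ ∪{p : p ∈ Spec R, p ≠ m}; (4) for every prime ideal p ≠ m of R, the R_p-module M_p has a nonzero free direct summand (i.e. R_p is a direct summand of M_p). -/
/-!
In a one-dimensional Noetherian local ring the primes `p ≠ m` are minimal, hence finitely many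
and pairwise incomparable, and `R ⧸ I` has finite length exactly when `I` lies in none of them.
Because `Hom` commutes with localization for finitely presented `M`, `S⁻¹R` splits off `S⁻¹M`
exactly when `f x ∈ S` for some `f : M →ₗ[R] R` and `x : M`. Prime avoidance then moves between
the trace ideal avoiding each `p` separately, one functional whose image avoids all of them, and
one value `f x` avoiding all of them.
-/


/-- The length of an `R`-module `M`: the supremum of lengths of strictly
increasing chains of submodules of `M`, valued in `ℕ∞`. -/
noncomputable def modLength (R M : Type*) [CommRing R] [AddCommGroup M] [Module R M] : ℕ∞ :=
  ⨆ s : RelSeries {p : Submodule R M × Submodule R M | p.1 < p.2}, (s.length : ℕ∞)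

/-- `h(M) = inf { ℓ_R(R/Im f) : f ∈ Hom_R(M,R) }`. -/
noncomputable def hInv (R M : Type*) [CommRing R] [AddCommGroup M] [Module R M] : ℕ∞ :=
  ⨅ f : M →ₗ[R] R, modLength R (R ⧸ LinearMap.range f)

/-- The trace ideal `tr_R(M) = Σ_{f ∈ Hom_R(M,R)} Im f`. -/
noncomputable def traceIdeal (R M : Type*) [CommRing R] [AddCommGroup M] [Module R M] : Ideal R :=
  ⨆ f : M →ₗ[R] R, LinearMap.range f

section Length

variable {R M : Type*} [CommRing R] [AddCommGroup M] [Module R M]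

lemma modLength_eq_length : modLength R M = Module.length R M := by
  apply WithBot.coe_injective
  rw [Module.coe_length, Order.krullDim_eq_iSup_length]
  rfl

lemma modLength_lt_top_iff : modLength R M < ⊤ ↔ IsFiniteLength R M := by
  rw [modLength_eq_length, lt_top_iff_ne_top, Module.length_ne_top_iff]

lemma isFiniteLength_quotient_iff [IsNoetherianRing R] (I : Ideal R) :
    IsFiniteLength R (R ⧸ I) ↔ ∀ p : Ideal R, p.IsPrime → I ≤ p → p.IsMaximal := by
  have hartinian : IsArtinian R (R ⧸ I) ↔ IsArtinianRing (R ⧸ I) :=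
    ⟨fun _ => isArtinian_of_tower R inferInstance,
      fun _ => isArtinian_of_surjective_algebraMap (Ideal.Quotient.mk_surjective (I := I))⟩
  rw [isFiniteLength_iff_isNoetherian_isArtinian, and_iff_right (isNoetherian_quotient I),
    hartinian, isArtinianRing_iff_krullDimLE_zero, Ring.krullDimLE_zero_iff]
  have hker : RingHom.ker (Ideal.Quotient.mk I) = I := Ideal.mk_ker
  constructor
  · intro h p hp hIp
    have : (p.map (Ideal.Quotient.mk I)).IsMaximal :=
      h _ (Ideal.map_isPrime_of_surjective Ideal.Quotient.mk_surjective (by rwa [hker]))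
    have := Ideal.comap_isMaximal_of_surjective _ Ideal.Quotient.mk_surjective
      (K := p.map (Ideal.Quotient.mk I))
    rwa [Ideal.comap_map_of_surjective' _ Ideal.Quotient.mk_surjective, hker,
      sup_eq_left.mpr hIp] at this
  · intro h J hJ
    exact Ideal.isMaximal_of_isIntegral_of_isMaximal_comap _
      (h _ (hJ.comap _) (by simpa using Ideal.ker_le_comap (Ideal.Quotient.mk I)))

end Length

lemma mem_minimalPrimes_of_ne_maximalIdeal {R : Type*} [CommRing R] [IsLocalRing R]
    [Ring.KrullDimLE 1 R] {p : Ideal R} [p.IsPrime]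
    (hp : p ≠ IsLocalRing.maximalIdeal R) : p ∈ minimalPrimes R := by
  rw [← Ideal.height_eq_zero_iff]
  have hlt : p < IsLocalRing.maximalIdeal R :=
    lt_of_le_of_ne (IsLocalRing.le_maximalIdeal Ideal.IsPrime.ne_top') hp
  have hmax : (IsLocalRing.maximalIdeal R).height ≤ 1 := by
    exact_mod_cast Ideal.height_le_ringKrullDim_of_isPrime.trans (Ring.krullDimLE_iff.mp ‹_›)
  have := (Ideal.height_add_one_le_of_lt_of_isPrime hlt).trans hmax
  exact Order.lt_one_iff.mp ((ENat.add_one_le_iff' ENat.one_ne_top).mp this)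

section OneDimensionalLocal

variable {R : Type*} [CommRing R] [IsNoetherianRing R] [IsLocalRing R]

lemma modLength_quotient_lt_top_iff (I : Ideal R) :
    modLength R (R ⧸ I) < ⊤ ↔
      ∀ p : Ideal R, p.IsPrime → p ≠ IsLocalRing.maximalIdeal R → ¬ I ≤ p := by
  simp only [modLength_lt_top_iff, isFiniteLength_quotient_iff, IsLocalRing.isMaximal_iff]
  grind

lemma exists_finset_isPrime_ne_maximalIdeal [Ring.KrullDimLE 1 R] :
    ∃ T : Finset (Ideal R), (∀ p, p ∈ T ↔ p.IsPrime ∧ p ≠ IsLocalRing.maximalIdeal R) ∧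
      IsAntichain (· ≤ ·) (T : Set (Ideal R)) := by
  have hmin : {p : Ideal R | p.IsPrime ∧ p ≠ IsLocalRing.maximalIdeal R} ⊆ minimalPrimes R :=
    fun p ⟨_, hp⟩ => mem_minimalPrimes_of_ne_maximalIdeal hp
  have hfin := (minimalPrimes.finite_of_isNoetherianRing R).subset hmin
  refine ⟨hfin.toFinset, fun p => hfin.mem_toFinset, ?_⟩
  rw [hfin.coe_toFinset]
  exact (setOfPred_minimal_antichain _).subset hmin

end OneDimensionalLocal

section Avoidance

variable {R M : Type*} [CommRing R] [AddCommGroup M] [Module R M]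

lemma traceIdeal_le_iff {I : Ideal R} :
    traceIdeal R M ≤ I ↔ ∀ f : M →ₗ[R] R, LinearMap.range f ≤ I :=
  iSup_le_iff

lemma exists_notMem_forall_mem_of_isAntichain {T : Finset (Ideal R)}
    (hT : IsAntichain (· ≤ ·) (T : Set (Ideal R))) {p : Ideal R} (hp : p.IsPrime) (hpT : p ∈ T) :
    ∃ c ∉ p, ∀ q ∈ T, q ≠ p → c ∈ q := by
  have : ¬ (T.erase p).inf id ≤ p := by
    rw [hp.inf_le']
    rintro ⟨q, hq, hqp⟩
    exact hT (Finset.mem_of_mem_erase hq) hpT (Finset.ne_of_mem_erase hq) hqp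
  obtain ⟨c, hc, hcp⟩ := SetLike.not_le_iff_exists.mp this
  exact ⟨c, hcp, fun q hq hqp => Finset.inf_le (f := id) (Finset.mem_erase.mpr ⟨hqp, hq⟩) hc⟩

lemma exists_linearMap_forall_range_not_le {T : Finset (Ideal R)}
    (hprime : ∀ p ∈ T, p.IsPrime) (hT : IsAntichain (· ≤ ·) (T : Set (Ideal R)))
    (h : ∀ p ∈ T, ∃ f : M →ₗ[R] R, ¬ LinearMap.range f ≤ p) :
    ∃ f : M →ₗ[R] R, ∀ p ∈ T, ¬ LinearMap.range f ≤ p := by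
  classical
  choose! φ hφ using h
  choose! c hcp hcq using fun p hp => exists_notMem_forall_mem_of_isAntichain hT (hprime p hp) hp
  -- `c q` lies in every member of `T` but `q`, so only the term `c p • φ p` can leave `p`.
  refine ⟨∑ q ∈ T, c q • φ q, fun p hp hle => ?_⟩
  obtain ⟨_, ⟨y, rfl⟩, hy⟩ := SetLike.not_le_iff_exists.mp (hφ p hp)
  have hrest : ∑ q ∈ T.erase p, c q * φ q y ∈ p :=
    p.sum_mem fun q hq => p.mul_mem_right _
      (hcq q (Finset.mem_of_mem_erase hq) p hp (Finset.ne_of_mem_erase hq).symm)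
  have hsum : c p * φ p y + ∑ q ∈ T.erase p, c q * φ q y ∈ p := by
    rw [Finset.add_sum_erase T (fun q => c q * φ q y) hp]
    simpa using hle ⟨y, rfl⟩
  rcases (hprime p hp).mem_or_mem ((p.add_mem_iff_left hrest).mp hsum) with hc | hφy
  · exact hcp p hp hc
  · exact hy hφy

lemma exists_forall_apply_notMem {T : Finset (Ideal R)} (hprime : ∀ p ∈ T, p.IsPrime)
    {f : M →ₗ[R] R} (hf : ∀ p ∈ T, ¬ LinearMap.range f ≤ p) : ∃ x, ∀ p ∈ T, f x ∉ p := by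
  have : ¬ ((LinearMap.range f : Ideal R) : Set R) ⊆ ⋃ p ∈ (T : Set (Ideal R)), p := by
    rw [Ideal.subset_union_prime ⊥ ⊥ fun p hp _ _ => hprime p hp]
    rintro ⟨p, hp, hle⟩
    exact hf p hp hle
  obtain ⟨_, ⟨x, rfl⟩, hx⟩ := Set.not_subset.mp this
  exact ⟨x, fun p hp hxp => hx (Set.mem_biUnion hp hxp)⟩

end Avoidance

section Localization

variable {R M : Type*} [CommRing R] [AddCommGroup M] [Module R M] (S : Submonoid R)

open IsLocalizedModule

lemma mapExtendScalars_mk (f : M →ₗ[R] R) (x : M) (s : S) :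
    mapExtendScalars S (LocalizedModule.mkLinearMap S M) (Algebra.linearMap R (Localization S))
      (Localization S) f (LocalizedModule.mk x s) = Localization.mk (f x) s := by
  rw [mapExtendScalars_apply_apply, mk_eq_mk', map_mk', Localization.mk_eq_mk',
    IsLocalization.mk'_eq_mk']

lemma exists_comp_eq_id_localizedModule_iff_exists_apply_mem [Module.FinitePresentation R M] :
    (∃ (F : LocalizedModule S M →ₗ[Localization S] Localization S)
      (g : Localization S →ₗ[Localization S] LocalizedModule S M), F ∘ₗ g = LinearMap.id) ↔
      ∃ (f : M →ₗ[R] R) (x : M), f x ∈ S := by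
  set Φ := mapExtendScalars S (LocalizedModule.mkLinearMap S M)
    (Algebra.linearMap R (Localization S)) (Localization S)
  constructor
  · rintro ⟨F, g, hFg⟩
    obtain ⟨⟨h, s⟩, hhs⟩ := IsLocalizedModule.surj S Φ F
    obtain ⟨x, t, hxt⟩ : ∃ x t, LocalizedModule.mk x t = g 1 :=
      LocalizedModule.induction_on (fun x t => ⟨x, t, rfl⟩) (g 1)
    have hFg1 : F (g 1) = 1 := LinearMap.congr_fun hFg 1
    have : Localization.mk (h x) t = Localization.mk (s : R) 1 :=
      calc Localization.mk (h x) t = Φ h (LocalizedModule.mk x t) :=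
            (mapExtendScalars_mk S h x t).symm
        _ = (s • F) (g 1) := by rw [← hhs, hxt]
        _ = Localization.mk (s : R) 1 := by
          rw [LinearMap.smul_apply, hFg1, Submonoid.smul_def, Algebra.smul_def, mul_one,
            Localization.mk_one_eq_algebraMap]
    obtain ⟨c, hc⟩ := Localization.r_iff_exists.mp (Localization.mk_eq_mk_iff.mp this)
    refine ⟨(c : R) • h, x, ?_⟩
    have hc' : (c : R) * h x = c * (t * s) := by simpa using hc
    rw [LinearMap.smul_apply, smul_eq_mul, hc']
    exact S.mul_mem c.2 (S.mul_mem t.2 s.2)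
  · rintro ⟨f, x, hx⟩
    refine ⟨Φ f, LinearMap.toSpanSingleton _ _ (LocalizedModule.mk x ⟨f x, hx⟩), ?_⟩
    ext
    rw [LinearMap.comp_apply, LinearMap.toSpanSingleton_apply_one, mapExtendScalars_mk,
      LinearMap.id_apply]
    exact Localization.mk_self ⟨f x, hx⟩

end Localization

/-- For a one-dimensional Noetherian local ring `(R, m)` and a finitely
generated `R`-module `M`, the following are equivalent:
(1) `h(M) < ∞`; (2) `ℓ_R(R/tr_R(M)) < ∞`; (3) `S⁻¹R` is a direct summand of `S⁻¹M`, where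
`S = R \ ⋃ {p prime, p ≠ m}`; (4) `M_p` has a nonzero free direct summand for every prime
`p ≠ m`. -/
theorem stmt1 (R M : Type*) [CommRing R] [IsNoetherianRing R] [IsLocalRing R]
    (hdim : ringKrullDim R = 1)
    [AddCommGroup M] [Module R M] [Module.Finite R M]
    (S : Submonoid R)
    (hS : (S : Set R) =
      {x : R | ∀ p : Ideal R, p.IsPrime → p ≠ IsLocalRing.maximalIdeal R → x ∉ p}) :
    List.TFAE
      [ hInv R M < ⊤,
        modLength R (R ⧸ traceIdeal R M) < ⊤,
        ∃ (f : LocalizedModule S M →ₗ[Localization S] Localization S)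
          (g : Localization S →ₗ[Localization S] LocalizedModule S M),
          f ∘ₗ g = LinearMap.id,
        ∀ (p : Ideal R) [p.IsPrime], p ≠ IsLocalRing.maximalIdeal R →
          ∃ (f : LocalizedModule p.primeCompl M →ₗ[Localization.AtPrime p] Localization.AtPrime p)
            (g : Localization.AtPrime p →ₗ[Localization.AtPrime p] LocalizedModule p.primeCompl M),
            f ∘ₗ g = LinearMap.id ] := by
  have : Ring.KrullDimLE 1 R := Ring.krullDimLE_iff.mpr hdim.le
  have := Module.finitePresentation_of_finite R M
  obtain ⟨T, hT, hTanti⟩ := exists_finset_isPrime_ne_maximalIdeal (R := R)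
  have forall_mem_T (P : Ideal R → Prop) :
      (∀ p ∈ T, P p) ↔ ∀ p : Ideal R, p.IsPrime → p ≠ IsLocalRing.maximalIdeal R → P p := by
    simp only [hT, and_imp]
  have hTprime : ∀ p ∈ T, p.IsPrime := (forall_mem_T _).mpr fun _ hp _ => hp
  tfae_have 1 → 3 := fun h1 => by
    obtain ⟨f, hf⟩ := iInf_lt_iff.mp h1
    rw [modLength_quotient_lt_top_iff, ← forall_mem_T] at hf
    obtain ⟨x, hx⟩ := exists_forall_apply_notMem hTprime hf
    refine (exists_comp_eq_id_localizedModule_iff_exists_apply_mem S).mpr ⟨f, x, ?_⟩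
    rw [← SetLike.mem_coe, hS, Set.mem_ofPred_eq, ← forall_mem_T]
    exact hx
  tfae_have 3 → 4 := fun h3 p _ hpm => by
    obtain ⟨f, x, hx⟩ := (exists_comp_eq_id_localizedModule_iff_exists_apply_mem S).mp h3
    rw [← SetLike.mem_coe, hS] at hx
    exact (exists_comp_eq_id_localizedModule_iff_exists_apply_mem p.primeCompl).mpr
      ⟨f, x, hx p ‹_› hpm⟩
  tfae_have 4 → 2 := fun h4 => by
    refine (modLength_quotient_lt_top_iff _).mpr fun p hp hpm hle => ?_
    obtain ⟨f, x, hx⟩ :=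
      (exists_comp_eq_id_localizedModule_iff_exists_apply_mem p.primeCompl).mp (h4 p hpm)
    exact hx (traceIdeal_le_iff.mp hle f ⟨x, rfl⟩)
  tfae_have 2 → 1 := fun h2 => by
    simp only [modLength_quotient_lt_top_iff, traceIdeal_le_iff, not_forall, ← forall_mem_T] at h2
    obtain ⟨f, hf⟩ := exists_linearMap_forall_range_not_le hTprime hTanti h2
    refine iInf_lt_iff.mpr ⟨f, ?_⟩
    rwa [modLength_quotient_lt_top_iff, ← forall_mem_T]
  tfae_finish
end

section
/- Let (R, m) be a Cohen-Macaulay local ring of dimension one, I a regular ideal of R, and a ∈ I such that the principal ideal (a) is a reduction of I. Then the integral closures of the ideals I and (a) coincide, and both equal aR̄ ∩ R and IR̄ ∩ R, where R̄ is the integral closure of R in its total quotient ring Q(R) (here IR̄ denotes the R̄-submodule of Q(R) generated by I). That is: Ī = \overline{(a)} = aR̄ ∩ R = IR̄ ∩ R. -/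
/-!
If `I ^ (n + 1) = a I ^ n` and `I` contains a non-zerodivisor, then for `x ∈ I` multiplication by
`x / a` maps the finitely generated faithful `R`-module `I ^ n ⊆ Q(R)` into itself, so `x / a` is
integral over `R`: `I ⊆ aR̄`, whence `IR̄ = aR̄`. Dividing an equation of integral dependence of `x`
over `I` by `a ^ m` gives one of `x / a` over `R̄`, so `Ī ⊆ aR̄ ∩ R`. Conversely, scaling the roots of
a monic equation of `y ∈ R̄` by `a` gives an equation of `a y` over `(a)`, so
`aR̄ ∩ R ⊆ (a)‾ ⊆ Ī`.
-/

/-- `x` lies in the integral closure of the ideal `I`: there is an equation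
`x ^ n + a 1 * x ^ (n-1) + ⋯ + a n = 0` with `n ≥ 1` and `a i ∈ I ^ i`. -/
def MemIdealIntegralClosure {R : Type*} [CommRing R] (I : Ideal R) (x : R) : Prop :=
  ∃ n : ℕ, 0 < n ∧ ∃ a : ℕ → R, (∀ i ∈ Finset.Icc 1 n, a i ∈ I ^ i) ∧
    x ^ n + ∑ i ∈ Finset.Icc 1 n, a i * x ^ (n - i) = 0

open Polynomial
open scoped nonZeroDivisors

theorem Finset.sum_Icc_one_tsub_eq_sum_range {M : Type*} [AddCommMonoid M] (n : ℕ)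
    (g : ℕ → M) : ∑ i ∈ Icc 1 n, g (n - i) = ∑ j ∈ range n, g j := by
  refine sum_nbij' (n - ·) (n - ·) ?_ ?_ ?_ ?_ ?_ <;>
    intros <;> simp_all only [mem_Icc, mem_range] <;> omega

section MemIdealIntegralClosure

variable {R : Type*} [CommRing R]

theorem MemIdealIntegralClosure.mono {I J : Ideal R} (hIJ : I ≤ J) {x : R}
    (hx : MemIdealIntegralClosure I x) : MemIdealIntegralClosure J x := by
  obtain ⟨n, hn, c, hc, hx⟩ := hx
  exact ⟨n, hn, c, fun i hi ↦ Ideal.pow_right_mono hIJ i (hc i hi), hx⟩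

theorem MemIdealIntegralClosure.map {S : Type*} [CommRing S] (f : R →+* S) {I : Ideal R}
    {x : R} (hx : MemIdealIntegralClosure I x) : MemIdealIntegralClosure (I.map f) (f x) := by
  obtain ⟨n, hn, c, hc, hx⟩ := hx
  refine ⟨n, hn, f ∘ c, fun i hi ↦ ?_, ?_⟩
  · rw [← Ideal.map_pow]
    exact Ideal.mem_map_of_mem f (hc i hi)
  · simpa using congr_arg f hx

theorem memIdealIntegralClosure_of_monic {I : Ideal R} {x : R} {p : R[X]} (hp : p.Monic)
    (hcoeff : ∀ k < p.natDegree, p.coeff k ∈ I ^ (p.natDegree - k)) (hx : p.eval x = 0) :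
    MemIdealIntegralClosure I x := by
  rcases p.natDegree.eq_zero_or_pos with hdeg | hdeg
  · rw [hp.natDegree_eq_zero.1 hdeg, eval_one] at hx
    have : Subsingleton R := subsingleton_of_zero_eq_one hx.symm
    exact ⟨1, one_pos, 0, fun _ _ ↦ zero_mem _, Subsingleton.elim _ _⟩
  refine ⟨p.natDegree, hdeg, fun i ↦ p.coeff (p.natDegree - i), fun i hi ↦ ?_, ?_⟩
  · rw [Finset.mem_Icc] at hi
    simpa [Nat.sub_sub_self hi.2] using hcoeff (p.natDegree - i) (by omega)
  · rw [Finset.sum_Icc_one_tsub_eq_sum_range (g := fun j ↦ p.coeff j * x ^ j), ← hx,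
      eval_eq_sum_range, Finset.sum_range_succ, hp.coeff_natDegree, one_mul, add_comm]

theorem isIntegral_of_pow_add_sum_eq_zero {A : Type*} [Ring A] [Algebra R A] {y : A} {n : ℕ}
    (c : ℕ → R) (hy : y ^ n + ∑ i ∈ Finset.Icc 1 n, algebraMap R A (c i) * y ^ (n - i) = 0) :
    IsIntegral R y := by
  have hdeg : (∑ i ∈ Finset.Icc 1 n, C (c i) * X ^ (n - i)).degree < (n : WithBot ℕ) := by
    refine (degree_sum_le _ _).trans_lt ((Finset.sup_lt_iff (WithBot.bot_lt_coe n)).2 ?_)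
    intro i hi
    refine (degree_C_mul_X_pow_le _ _).trans_lt ?_
    rw [Finset.mem_Icc] at hi
    exact Nat.cast_lt.2 (by omega)
  refine ⟨X ^ n + ∑ i ∈ Finset.Icc 1 n, C (c i) * X ^ (n - i), monic_X_pow_add hdeg, ?_⟩
  simpa [eval₂_finsetSum, ← Algebra.commutes] using hy

theorem MemIdealIntegralClosure.exists_isIntegral_of_span_singleton {K : Type*} [CommRing K]
    [Algebra R K] {a x : R} (ha : IsUnit (algebraMap R K a))
    (hx : MemIdealIntegralClosure (Ideal.span {a}) x) :
    ∃ y : K, IsIntegral R y ∧ algebraMap R K x = algebraMap R K a * y := by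
  obtain ⟨n, -, c, hc, hx⟩ := hx
  choose! d hd using fun i hi ↦
    Ideal.mem_span_singleton'.1 (Ideal.span_singleton_pow a i ▸ hc i hi)
  set f := algebraMap R K
  obtain ⟨y, hxy⟩ : ∃ y : K, f x = f a * y :=
    ⟨ha.unit⁻¹ * f x, by rw [← mul_assoc, ha.mul_val_inv, one_mul]⟩
  refine ⟨y, isIntegral_of_pow_add_sum_eq_zero (n := n) d ?_, hxy⟩
  refine (ha.pow n).mul_left_cancel ?_
  calc f a ^ n * (y ^ n + ∑ i ∈ Finset.Icc 1 n, f (d i) * y ^ (n - i))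
      = f (x ^ n + ∑ i ∈ Finset.Icc 1 n, c i * x ^ (n - i)) := by
        rw [mul_add, Finset.mul_sum, map_add, map_sum, map_pow, hxy, mul_pow]
        congr 1
        refine Finset.sum_congr rfl fun i hi ↦ ?_
        rw [← hd i hi, map_mul, map_mul, map_pow, map_pow, hxy, mul_pow,
          ← pow_mul_pow_sub _ (Finset.mem_Icc.1 hi).2]
        ring
    _ = f a ^ n * 0 := by rw [hx, map_zero, mul_zero]

theorem memIdealIntegralClosure_span_singleton_of_isIntegral {K : Type*} [CommRing K]
    [Algebra R K] (hinj : Function.Injective (algebraMap R K)) {a x : R} {y : K}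
    (hy : IsIntegral R y) (hxy : algebraMap R K x = algebraMap R K a * y) :
    MemIdealIntegralClosure (Ideal.span {a}) x := by
  obtain ⟨p, hp, hpy⟩ := hy
  refine memIdealIntegralClosure_of_monic ((monic_scaleRoots_iff a).2 hp) (fun k _ ↦ ?_) (hinj ?_)
  · rw [coeff_scaleRoots, natDegree_scaleRoots, Ideal.span_singleton_pow]
    exact Ideal.mul_mem_left _ _ (Ideal.mem_span_singleton_self _)
  · rw [map_zero, ← eval₂_at_apply, hxy]
    exact scaleRoots_eval₂_eq_zero _ hpy

theorem MemIdealIntegralClosure.exists_isIntegral_of_forall_mem {K : Type*} [CommRing K]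
    [Algebra R K] {I : Ideal R} {a x : R} (ha : IsUnit (algebraMap R K a))
    (hI : ∀ b ∈ I, ∃ y : K, IsIntegral R y ∧ algebraMap R K b = algebraMap R K a * y)
    (hx : MemIdealIntegralClosure I x) :
    ∃ y : K, IsIntegral R y ∧ algebraMap R K x = algebraMap R K a * y := by
  let S := integralClosure R K
  have hmap : I.map (algebraMap R S) ≤ Ideal.span {algebraMap R S a} := by
    refine Ideal.map_le_iff_le_comap.2 fun b hb ↦ ?_
    obtain ⟨y, hy, hby⟩ := hI b hb
    exact Ideal.mem_span_singleton'.2 ⟨⟨y, hy⟩, Subtype.ext (hby.trans (mul_comm _ _)).symm⟩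
  rw [IsScalarTower.algebraMap_apply R S K] at ha
  obtain ⟨y, hy, hxy⟩ := ((hx.map _).mono hmap).exists_isIntegral_of_span_singleton ha
  refine ⟨y, isIntegral_trans y hy, ?_⟩
  simpa only [← IsScalarTower.algebraMap_apply] using hxy

end MemIdealIntegralClosure

theorem Subalgebra.mem_span_singleton_iff_exists_mul_eq {R K : Type*} [CommRing R] [CommRing K]
    [Algebra R K] (S : Subalgebra R K) {w z : K} :
    z ∈ Submodule.span S {w} ↔ ∃ y ∈ S, z = w * y := by
  rw [Submodule.mem_span_singleton]
  exact ⟨fun ⟨s, hs⟩ ↦ ⟨s, s.2, hs ▸ mul_comm _ _⟩, fun ⟨y, hy, h⟩ ↦ ⟨⟨y, hy⟩, h ▸ mul_comm _ _⟩⟩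

section Reduction

variable {R : Type*} [CommRing R] {I : Ideal R} {a : R} {n : ℕ}

theorem mem_nonZeroDivisors_of_pow_succ_eq_span_singleton_mul
    (hred : I ^ (n + 1) = Ideal.span {a} * I ^ n) {t : R} (htI : t ∈ I) (ht : t ∈ R⁰) :
    a ∈ R⁰ := by
  obtain ⟨c, -, hc⟩ := Ideal.mem_span_singleton_mul.1 (hred ▸ Ideal.pow_mem_pow htI (n + 1))
  exact (mul_mem_nonZeroDivisors.1 (hc ▸ pow_mem ht (n + 1))).1

theorem isIntegral_of_forall_mul_mem [IsNoetherianRing R] {K : Type*} [CommRing K] [Algebra R K]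
    {N : Submodule R K} (hN : N.FG) {u : K} (hu : IsUnit u) (huN : u ∈ N) {z : K}
    (hz : ∀ y ∈ N, z * y ∈ N) : IsIntegral R z := by
  have hpow : ∀ k : ℕ, z ^ k * u ∈ N := by
    intro k
    induction k with
    | zero => simpa using huN
    | succ k ih => rw [pow_succ', mul_assoc]; exact hz _ ih
  have hadjoin : Subalgebra.toSubmodule (Algebra.adjoin R {z}) ≤
      N.map (LinearMap.mulLeft R (↑hu.unit⁻¹ : K)) := by
    rw [Algebra.adjoin_eq_span, Submodule.span_le, ← Submonoid.powers_eq_closure]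
    rintro _ ⟨k, rfl⟩
    exact ⟨z ^ k * u, hpow k, by simp [mul_left_comm _ (z ^ k)]⟩
  exact .of_mem_of_fg _ ((hN.map _).of_le hadjoin) z (Algebra.self_mem_adjoin_singleton R z)

theorem exists_isIntegral_mul_eq_of_pow_succ_eq_span_singleton_mul [IsNoetherianRing R]
    {K : Type*} [CommRing K] [Algebra R K] [IsFractionRing R K]
    (hred : I ^ (n + 1) = Ideal.span {a} * I ^ n) {t : R} (htI : t ∈ I) (ht : t ∈ R⁰)
    {x : R} (hx : x ∈ I) :
    ∃ y : K, IsIntegral R y ∧ algebraMap R K x = algebraMap R K a * y := by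
  set f := algebraMap R K
  have ha := mem_nonZeroDivisors_of_pow_succ_eq_span_singleton_mul hred htI ht
  set y := IsLocalization.mk' K x ⟨a, ha⟩
  have hy : f a * y = f x := IsLocalization.mk'_spec' K x ⟨a, ha⟩
  refine ⟨y, isIntegral_of_forall_mul_mem (N := Submodule.map (Algebra.linearMap R K) (I ^ n))
    ((IsNoetherian.noetherian _).map _) (IsLocalization.map_units K ⟨t ^ n, pow_mem ht n⟩)
    (Submodule.mem_map_of_mem (Ideal.pow_mem_pow htI n)) ?_, hy.symm⟩
  rintro _ ⟨b, hb, rfl⟩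
  obtain ⟨c, hc, hac⟩ : ∃ c ∈ I ^ n, a * c = b * x := Ideal.mem_span_singleton_mul.1
    (hred ▸ pow_succ I n ▸ Ideal.mul_mem_mul hb hx)
  refine ⟨c, hc, (IsLocalization.map_units K ⟨a, ha⟩).mul_left_cancel ?_⟩
  change f a * f c = f a * (y * f b)
  rw [← map_mul, hac, map_mul, ← hy]
  ring

end Reduction

theorem stmt5_general (R : Type*) [CommRing R] [IsNoetherianRing R]
    (I : Ideal R) (hreg : ∃ x ∈ I, x ∈ nonZeroDivisors R)
    (a : R) (ha : a ∈ I)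
    (hred : ∃ n : ℕ, 0 < n ∧ I ^ (n + 1) = Ideal.span {a} * I ^ n) :
    ∀ x : R,
      (MemIdealIntegralClosure I x ↔ MemIdealIntegralClosure (Ideal.span {a}) x) ∧
      (MemIdealIntegralClosure I x ↔
        ∃ y ∈ integralClosure R (FractionRing R),
          algebraMap R (FractionRing R) x = algebraMap R (FractionRing R) a * y) ∧
      (MemIdealIntegralClosure I x ↔
        algebraMap R (FractionRing R) x ∈
          Submodule.span ↥(integralClosure R (FractionRing R))
            (algebraMap R (FractionRing R) '' I)) := by
  obtain ⟨t, htI, ht⟩ := hreg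
  obtain ⟨n, -, hred⟩ := hred
  set K := FractionRing R
  set f := algebraMap R K
  have hdiv (b : R) (hb : b ∈ I) : ∃ y : K, IsIntegral R y ∧ f b = f a * y :=
    exists_isIntegral_mul_eq_of_pow_succ_eq_span_singleton_mul hred htI ht hb
  have haK : IsUnit (f a) := IsLocalization.map_units K
    ⟨a, mem_nonZeroDivisors_of_pow_succ_eq_span_singleton_mul hred htI ht⟩
  have hspan : Submodule.span (integralClosure R K) (f '' I) =
      Submodule.span (integralClosure R K) {f a} := by
    refine le_antisymm (Submodule.span_le.2 ?_) (Submodule.span_le.2 ?_)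
    · rintro _ ⟨b, hb, rfl⟩
      exact (Subalgebra.mem_span_singleton_iff_exists_mul_eq _).2 (hdiv b hb)
    · exact Set.singleton_subset_iff.2 (Submodule.subset_span ⟨a, ha, rfl⟩)
  have hsingleton (x : R) :
      MemIdealIntegralClosure (Ideal.span {a}) x ↔ ∃ y ∈ integralClosure R K, f x = f a * y :=
    ⟨fun h ↦ h.exists_isIntegral_of_span_singleton haK, fun ⟨_, hy, hxy⟩ ↦
      memIdealIntegralClosure_span_singleton_of_isIntegral (IsFractionRing.injective R K) hy hxy⟩
  have hI (x : R) : MemIdealIntegralClosure I x ↔ MemIdealIntegralClosure (Ideal.span {a}) x :=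
    ⟨fun h ↦ (hsingleton x).2 (h.exists_isIntegral_of_forall_mem haK hdiv),
      .mono ((Ideal.span_singleton_le_iff_mem I).2 ha)⟩
  intro x
  refine ⟨hI x, (hI x).trans (hsingleton x), ?_⟩
  rw [hspan, Subalgebra.mem_span_singleton_iff_exists_mul_eq, hI, hsingleton]

/-- Let `(R, m)` be a one-dimensional Cohen-Macaulay local ring
(Noetherian local with `dim R = 1` and `m` containing a non-zerodivisor), `I` a regular
ideal and `a ∈ I` such that `(a)` is a reduction of `I`.  Then the integral closures of the
ideals `I` and `(a)` coincide and both equal `aR̄ ∩ R` and `IR̄ ∩ R`, where `R̄` is the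
integral closure of `R` in its total quotient ring `Q(R)`. -/
theorem stmt5 (R : Type*) [CommRing R] [IsNoetherianRing R] [IsLocalRing R]
    (hdim : ringKrullDim R = 1)
    (hdepth : ∃ x ∈ IsLocalRing.maximalIdeal R, x ∈ nonZeroDivisors R)
    (I : Ideal R) (hreg : ∃ x ∈ I, x ∈ nonZeroDivisors R)
    (a : R) (ha : a ∈ I)
    (hred : ∃ n : ℕ, 0 < n ∧ I ^ (n + 1) = Ideal.span {a} * I ^ n) :
    ∀ x : R,
      (MemIdealIntegralClosure I x ↔ MemIdealIntegralClosure (Ideal.span {a}) x) ∧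
      (MemIdealIntegralClosure I x ↔
        ∃ y ∈ integralClosure R (FractionRing R),
          algebraMap R (FractionRing R) x = algebraMap R (FractionRing R) a * y) ∧
      (MemIdealIntegralClosure I x ↔
        algebraMap R (FractionRing R) x ∈
          Submodule.span ↥(integralClosure R (FractionRing R))
            (algebraMap R (FractionRing R) '' I)) :=
  stmt5_general R I hreg a ha hred
end

section
/- Let (R, m) be a Cohen-Macaulay local ring of dimension one whose integral closure R̄ in the total quotient ring Q(R) is a discrete valuation ring with maximal ideal n, such that R̄ is a finitely generated R-module and the natural map R/m → R̄/n is an isomorphism. Let I be a regular ideal of R and let b ∈ I with v(b) = v(I), where v is the normalized valuation associated to R̄. Then the principal ideal (b) is a reduction of I. -/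
/-!
Because `R̄` is a discrete valuation ring, `v(b) ≤ v(x)` forces `b ∣ x` in `R̄`, so `I ⊆ bR̄`.
The `R`-submodules `b⁻ⁿIⁿ` of `Q(R)` then increase with `n` (as `b ∈ I`) and all lie in `R̄`,
a Noetherian `R`-module; once the chain stabilises, `b⁻⁽ⁿ⁺¹⁾Iⁿ⁺¹ = b⁻ⁿIⁿ`, i.e. `Iⁿ⁺¹ = bIⁿ`.
-/

/-- Supremum of lengths of strictly increasing finite chains in a preorder. -/
noncomputable def chainLen (α : Type*) [Preorder α] : ℕ∞ :=
  ⨆ s : RelSeries {(a, b) : α × α | a < b}, (s.length : ℕ∞)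

/-- The `R̄`-submodule of `Q(R)` generated by a set, where `R̄` is the integral closure of
`R` in its total quotient ring `Q(R) = FractionRing R`. -/
noncomputable def sbm (R : Type*) [CommRing R] (s : Set (FractionRing R)) :
    Submodule ↥(integralClosure R (FractionRing R)) (FractionRing R) :=
  Submodule.span ↥(integralClosure R (FractionRing R)) s

/-- The length over `R̄` of the subquotient `(R̄-span of O)/(R̄-span of A)`, computed as the
longest chain of `R̄`-submodules between the two spans. -/
noncomputable def relLen (R : Type*) [CommRing R] (O A : Set (FractionRing R)) : ℕ∞ :=
  chainLen ↥(Set.Icc (sbm R A) (sbm R O))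

/-- The normalized valuation `v : Q(R) → ℤ ∪ {∞}` associated to `R̄`:
`v(α) = ℓ_{R̄}((R̄ + R̄α)/R̄α) − ℓ_{R̄}((R̄ + R̄α)/R̄)`.  When `R̄` is a discrete valuation
ring, this agrees with `v(a/b) = ℓ_{R̄}(R̄/aR̄) − ℓ_{R̄}(R̄/bR̄)`. -/
noncomputable def vVal (R : Type*) [CommRing R] (α : FractionRing R) : WithTop ℤ :=
  (relLen R {1, α} {α}).map (Nat.cast : ℕ → ℤ) - (relLen R {1, α} {1}).map (Nat.cast : ℕ → ℤ)

theorem chainLen_eq_zero_of_subsingleton (α : Type*) [Preorder α] [Subsingleton α] :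
    chainLen α = 0 :=
  nonpos_iff_eq_zero.mp <| iSup_le fun s => by
    rcases Nat.eq_zero_or_pos s.length with h | h
    · simp [h]
    · exact absurd (Subsingleton.elim _ _) (s.step ⟨0, h⟩).ne

theorem chainLen_Icc_self {α : Type*} [PartialOrder α] (a : α) : chainLen (Set.Icc a a) = 0 :=
  have : Subsingleton (Set.Icc a a) := by simp
  chainLen_eq_zero_of_subsingleton _

theorem chainLen_ne_top (α : Type*) [Preorder α] [Finite α] : chainLen α ≠ ⊤ := by
  refine ne_top_of_le_ne_top (ENat.natCast_ne_top (Nat.card α)) (iSup_le fun s => ?_)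
  have h : Nat.card (Fin (s.length + 1)) ≤ Nat.card α :=
    Nat.card_le_card_of_injective s.toFun (LTSeries.strictMono s).injective
  rw [Nat.card_eq_fintype_card, Fintype.card_fin] at h
  exact_mod_cast Nat.le_of_succ_le h

theorem chainLen_Icc_add_one_le {α : Type*} [Preorder α] {A A' B : α} (hA : A < A')
    (hB : A' ≤ B) : chainLen (Set.Icc A' B) + 1 ≤ chainLen (Set.Icc A B) := by
  have : Nonempty (RelSeries {(a, b) : Set.Icc A' B × Set.Icc A' B | a < b}) :=
    ⟨RelSeries.singleton _ ⟨A', le_rfl, hB⟩⟩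
  rw [chainLen, ENat.iSup_add]
  refine iSup_le fun s => ?_
  let incl : Set.Icc A' B → Set.Icc A B := fun x => ⟨x.1, hA.le.trans x.2.1, x.2.2⟩
  let s' := s.map (s := {(a, b) : Set.Icc A B × Set.Icc A B | a < b}) ⟨incl, fun h => h⟩
  have hhead : (⟨A, le_rfl, hA.le.trans (s.head.2.1.trans s.head.2.2)⟩ : Set.Icc A B) < s'.head :=
    Subtype.mk_lt_mk.mpr (hA.trans_le s.head.2.1)
  calc (s.length : ℕ∞) + 1 = ((s'.cons _ hhead).length : ℕ∞) := by simp [s']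
    _ ≤ chainLen (Set.Icc A B) := le_iSup (fun t => (t.length : ℕ∞)) (s'.cons _ hhead)

theorem chainLen_Icc_lt_of_lt {α : Type*} [Preorder α] {A A' B : α} [Finite (Set.Icc A' B)]
    (hA : A < A') (hB : A' ≤ B) : chainLen (Set.Icc A' B) < chainLen (Set.Icc A B) :=
  (ENat.add_one_le_iff (chainLen_ne_top _)).mp (chainLen_Icc_add_one_le hA hB)

theorem IsDiscreteValuationRing.setOf_mem_finite {S : Type*} [CommRing S] [IsDomain S]
    [IsDiscreteValuationRing S] {r : S} (hr : r ≠ 0) : {J : Ideal S | r ∈ J}.Finite := by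
  obtain ⟨ϖ, hϖ⟩ := exists_irreducible S
  obtain ⟨m, u, rfl⟩ := eq_unit_mul_pow_irreducible hr hϖ
  refine ((Set.finite_Iic m).image fun n => Ideal.span {ϖ ^ n}).subset fun J hJ => ?_
  have hJ0 : J ≠ ⊥ := by rintro rfl; exact hr (Ideal.mem_bot.mp hJ)
  obtain ⟨n, rfl⟩ := ideal_eq_span_pow_irreducible hJ0 hϖ
  have hdvd : ϖ ^ n ∣ ϖ ^ m := Units.dvd_mul_left.mp (Ideal.mem_span_singleton.mp hJ)
  exact ⟨n, (pow_dvd_pow_iff hϖ.ne_zero hϖ.not_isUnit).mp hdvd, rfl⟩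

theorem finite_Icc_span_algebraMap {S K : Type*} [CommRing S] [IsDomain S]
    [IsDiscreteValuationRing S] [CommRing K] [Algebra S K] {r : S} (hr : r ≠ 0) :
    Finite (Set.Icc (Submodule.span S {algebraMap S K r}) (Submodule.span S {1})) := by
  have := (IsDiscreteValuationRing.setOf_mem_finite hr).to_subtype
  let φ := Algebra.linearMap S K
  have hrange : LinearMap.range φ = Submodule.span S {1} := by
    ext y; simp [Submodule.mem_span_singleton, Algebra.smul_def, φ]
  refine Finite.of_injective (fun N => (⟨Submodule.comap φ N.1,
    show φ r ∈ N.1 from N.2.1 (Submodule.mem_span_singleton_self _)⟩ : {J : Ideal S | r ∈ J}))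
    fun N N' h => Subtype.ext ?_
  have hN : ∀ N : Set.Icc (Submodule.span S {algebraMap S K r}) (Submodule.span S {1}),
      Submodule.map φ (Submodule.comap φ N.1) = N.1 := fun N => by
    rw [Submodule.map_comap_eq, hrange, inf_eq_right.mpr N.2.2]
  rw [← hN N, ← hN N']
  exact congrArg (fun J => Submodule.map φ J.1) h

theorem vVal_coe_eq_chainLen {R : Type*} [CommRing R] (a : integralClosure R (FractionRing R)) :
    vVal R a = (chainLen (Set.Icc (sbm R {(a : FractionRing R)}) (sbm R {1}))).map Nat.cast := by
  have hins : sbm R {1, (a : FractionRing R)} = sbm R {1} := by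
    refine (Submodule.span_insert _ _).trans (sup_eq_left.mpr ?_)
    exact Submodule.span_singleton_le_iff_mem _ _ |>.mpr
      (Submodule.mem_span_singleton.mpr ⟨a, mul_one _⟩)
  rw [vVal, relLen, relLen, hins, chainLen_Icc_self]
  simp

theorem dvd_of_vVal_le {R : Type*} [CommRing R] [IsDomain R]
    [IsDiscreteValuationRing (integralClosure R (FractionRing R))]
    {a c : integralClosure R (FractionRing R)} (h : vVal R a ≤ vVal R c) : a ∣ c := by
  by_contra hac
  have hc0 : c ≠ 0 := by rintro rfl; exact hac (dvd_zero a)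
  have hlt : Ideal.span {a} < Ideal.span {c} := Ideal.span_singleton_lt_span_singleton.mpr
    (dvdNotUnit_of_dvd_of_not_dvd ((ValuationRing.dvd_total a c).resolve_left hac) hac)
  have hlt' : sbm R {(a : FractionRing R)} < sbm R {(c : FractionRing R)} := by
    simpa [sbm, Submodule.map_span] using Submodule.map_strictMono_of_injective
      (f := Algebra.linearMap (integralClosure R (FractionRing R)) (FractionRing R))
      Subtype.val_injective hlt
  have hc1 : sbm R {(c : FractionRing R)} ≤ sbm R {1} :=
    (Submodule.span_singleton_le_iff_mem _ _).mpr
      (Submodule.mem_span_singleton.mpr ⟨c, mul_one _⟩)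
  have : Finite (Set.Icc (sbm R {(c : FractionRing R)}) (sbm R {1})) :=
    finite_Icc_span_algebraMap hc0
  rw [vVal_coe_eq_chainLen, vVal_coe_eq_chainLen] at h
  exact (chainLen_Icc_lt_of_lt hlt' hc1).not_ge
    ((WithTop.map_le_iff _ fun {_ _} => Int.ofNat_le).mp h)

theorem pow_succ_eq_mul_pow_of_mul_eq_one {M : Type*} [CommMonoid M] {p q a : M}
    (hpq : p * q = 1) {n : ℕ} (h : (q * a) ^ (n + 1) = (q * a) ^ n) :
    a ^ (n + 1) = p * a ^ n :=
  calc a ^ (n + 1) = (p * q) ^ (n + 1) * a ^ (n + 1) := by rw [hpq, one_pow, one_mul]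
    _ = p * (p ^ n * (q * a) ^ (n + 1)) := by rw [mul_pow, mul_pow, pow_succ p]; ac_rfl
    _ = p * ((p * q) ^ n * a ^ n) := by rw [h, mul_pow, mul_pow]; ac_rfl
    _ = p * a ^ n := by rw [hpq, one_pow, one_mul]

theorem Submodule.exists_pow_succ_eq_pow_of_one_le_of_le_subalgebra {R K : Type*} [CommRing R]
    [IsNoetherianRing R] [CommRing K] [Algebra R K] (T : Subalgebra R K) [Module.Finite R T]
    {M : Submodule R K} (h1 : 1 ≤ M) (hT : M ≤ Subalgebra.toSubmodule T) :
    ∃ n, 0 < n ∧ M ^ (n + 1) = M ^ n := by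
  set T' := Subalgebra.toSubmodule T
  have hpow : ∀ n, M ^ n ≤ T' := by
    intro n
    induction n with
    | zero =>
      rw [pow_zero, ← Algebra.toSubmodule_bot]
      exact Subalgebra.toSubmodule.monotone bot_le
    | succ n ih =>
      exact (pow_succ M n ▸ mul_le_mul' ih hT).trans_eq T.isIdempotentElem_toSubmodule
  have hmono : Monotone (M ^ · : ℕ → Submodule R K) := fun _ _ => pow_le_pow_right' h1
  have : IsNoetherian R T' := isNoetherian_of_isNoetherianRing_of_finite R T
  obtain ⟨n, hn⟩ := monotone_stabilizes_iff_noetherian.mpr this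
    ⟨fun k => comap T'.subtype (M ^ k), fun _ _ hkl => comap_mono (hmono hkl)⟩
  refine ⟨n + 1, n.succ_pos, ?_⟩
  have hcomap : comap T'.subtype (M ^ (n + 2)) = comap T'.subtype (M ^ (n + 1)) :=
    (hn (n + 2) (by omega)).symm.trans (hn (n + 1) (by omega))
  simpa only [map_comap_subtype, inf_eq_right.mpr (hpow _)] using
    congrArg (map T'.subtype) hcomap

open Submodule in
theorem exists_pow_succ_eq_span_singleton_mul_pow_of_dvd {R K : Type*} [CommRing R]
    [IsNoetherianRing R] [Field K] [Algebra R K] (hinj : Function.Injective (algebraMap R K))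
    (T : Subalgebra R K) [Module.Finite R T] {I : Ideal R} {b : R} (hb : b ∈ I)
    (hdvd : ∀ x ∈ I, ∃ t ∈ T, algebraMap R K x = algebraMap R K b * t) :
    ∃ n, 0 < n ∧ I ^ (n + 1) = Ideal.span {b} * I ^ n := by
  by_cases hb0 : b = 0
  · have hI : I = ⊥ := eq_bot_iff.mpr fun x hx => by
      obtain ⟨t, -, ht⟩ := hdvd x hx
      exact hinj (by simpa [hb0] using ht)
    exact ⟨1, one_pos, by simp [hI, hb0]⟩
  set φ := (Algebra.ofId R K).toLinearMap
  set β := algebraMap R K b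
  have hβ : β ≠ 0 := (map_ne_zero_iff _ hinj).mpr hb0
  have hφ : Function.Injective (map φ) := map_injective_of_injective hinj
  have hspan : map φ (Ideal.span {b}) = span R {β} := by
    rw [Ideal.span, map_span, Set.image_singleton]; rfl
  set M := span R {β⁻¹} * map φ I
  have h1 : 1 ≤ M := by
    rw [one_eq_span, span_le, Set.singleton_subset_iff, SetLike.mem_coe, ← inv_mul_cancel₀ hβ]
    exact mul_mem_mul (mem_span_singleton_self _) (mem_map_of_mem hb)
  have hT : M ≤ Subalgebra.toSubmodule T := by
    refine mul_le.mpr fun y hy z hz => ?_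
    obtain ⟨c, rfl⟩ := mem_span_singleton.mp hy
    obtain ⟨x, hx, rfl⟩ := mem_map.mp hz
    obtain ⟨t, htT, ht⟩ := hdvd x hx
    have : β⁻¹ * φ x = t := by rw [inv_mul_eq_iff_eq_mul₀ hβ]; exact ht
    rw [smul_mul_assoc, this]
    exact T.toSubmodule.smul_mem c htT
  obtain ⟨n, hn, hstab⟩ := exists_pow_succ_eq_pow_of_one_le_of_le_subalgebra T h1 hT
  have hββ : span R {β} * span R {β⁻¹} = 1 := by
    rw [span_mul_span, Set.singleton_mul_singleton, mul_inv_cancel₀ hβ, one_eq_span]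
  refine ⟨n, hn, hφ ?_⟩
  rw [Submodule.map_mul, hspan, Submodule.map_pow, Submodule.map_pow]
  exact pow_succ_eq_mul_pow_of_mul_eq_one hββ hstab

theorem stmt11_general (R : Type*) [CommRing R] [IsDomain R] [IsNoetherianRing R]
    [IsDiscreteValuationRing ↥(integralClosure R (FractionRing R))]
    [Module.Finite R ↥(integralClosure R (FractionRing R))]
    (I : Ideal R)
    (b : R) (hbI : b ∈ I)
    -- `v(b) = v(I)`, i.e. `b` attains the minimal valuation on `I`:
    (hv : ∀ x ∈ I, vVal R (algebraMap R (FractionRing R) b) ≤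
      vVal R (algebraMap R (FractionRing R) x)) :
    ∃ n : ℕ, 0 < n ∧ I ^ (n + 1) = Ideal.span {b} * I ^ n := by
  refine exists_pow_succ_eq_span_singleton_mul_pow_of_dvd
    (IsFractionRing.injective R (FractionRing R)) (integralClosure R (FractionRing R)) hbI
    fun x hx => ?_
  obtain ⟨c, hc⟩ := dvd_of_vVal_le (a := ⟨_, isIntegral_algebraMap⟩)
    (c := ⟨_, isIntegral_algebraMap⟩) (hv x hx)
  exact ⟨c, c.2, congrArg Subtype.val hc⟩

/-- Let `(R, m)` be a one-dimensional Cohen-Macaulay local ring whose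
integral closure `R̄` in `Q(R)` is a DVR with maximal ideal `n`, finitely generated as an
`R`-module, with `R/m ≅ R̄/n`.  If `I` is a regular ideal and `b ∈ I` has `v(b) = v(I)`,
then `(b)` is a reduction of `I`. -/
theorem stmt11 (R : Type*) [CommRing R] [IsDomain R] [IsNoetherianRing R] [IsLocalRing R]
    (hdim : ringKrullDim R = 1)
    (hdepth : ∃ x ∈ IsLocalRing.maximalIdeal R, x ∈ nonZeroDivisors R)
    [IsDiscreteValuationRing ↥(integralClosure R (FractionRing R))]
    [Module.Finite R ↥(integralClosure R (FractionRing R))]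
    -- the natural map `R/m → R̄/n` is an isomorphism:
    (hres1 : ∀ r : R,
      algebraMap R ↥(integralClosure R (FractionRing R)) r ∈
          IsLocalRing.maximalIdeal ↥(integralClosure R (FractionRing R)) ↔
        r ∈ IsLocalRing.maximalIdeal R)
    (hres2 : ∀ y : ↥(integralClosure R (FractionRing R)), ∃ r : R,
      algebraMap R ↥(integralClosure R (FractionRing R)) r - y ∈
        IsLocalRing.maximalIdeal ↥(integralClosure R (FractionRing R)))
    (I : Ideal R) (hreg : ∃ x ∈ I, x ∈ nonZeroDivisors R)
    (b : R) (hbI : b ∈ I)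
    -- `v(b) = v(I)`, i.e. `b` attains the minimal valuation on `I`:
    (hv : ∀ x ∈ I, vVal R (algebraMap R (FractionRing R) b) ≤
      vVal R (algebraMap R (FractionRing R) x)) :
    ∃ n : ℕ, 0 < n ∧ I ^ (n + 1) = Ideal.span {b} * I ^ n :=
  stmt11_general R I b hbI hv
end

section
/- Let k be a field and let R = k[[X, XY, XY², XY³]] be the subring of the formal power series ring k[[X, Y]] generated (as a complete local k-subalgebra) by X, XY, XY², XY³, with maximal ideal m = (X, XY, XY², XY³), and let I = (XY, XY²) be the ideal of R generated by XY and XY². Then tr_R(I) = m (so ℓ_R(R/tr_R(I)) = 1), but h(I) = ∞. -/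
set_option synthInstance.maxHeartbeats 1000000
set_option maxHeartbeats 4000000

/-- The ring `R = k[[X, XY, XY², XY³]] ⊆ k[[X, Y]]`: the complete subalgebra of
`k[[X, Y]]` consisting of power series supported on monomials `XⁱYʲ` with `j ≤ 3i`. -/
noncomputable def R17 (k : Type*) [Field k] : Subalgebra k (MvPowerSeries (Fin 2) k) where
  carrier := {f | ∀ m : Fin 2 →₀ ℕ, 3 * m 0 < m 1 → MvPowerSeries.coeff m f = 0}
  add_mem' := by
    intro f g hf hg m hm
    rw [map_add, hf m hm, hg m hm, add_zero]
  mul_mem' := by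
    intro f g hf hg m hm
    rw [MvPowerSeries.coeff_mul]
    apply Finset.sum_eq_zero
    rintro ⟨p, q⟩ hpq
    rw [Finset.HasAntidiagonal.mem_antidiagonal] at hpq
    have e0 : p 0 + q 0 = m 0 := by rw [← hpq]; simp
    have e1 : p 1 + q 1 = m 1 := by rw [← hpq]; simp
    by_cases h1 : 3 * p 0 < p 1
    · rw [hf p h1, zero_mul]
    · have h2 : 3 * q 0 < q 1 := by omega
      rw [hg q h2, mul_zero]
  algebraMap_mem' := by
    intro c m hm
    have hm0 : m ≠ 0 := by
      intro h
      subst h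
      simp at hm
    rw [show (algebraMap k (MvPowerSeries (Fin 2) k)) c = (MvPowerSeries.C c : MvPowerSeries (Fin 2) k) from rfl,
      MvPowerSeries.coeff_C, if_neg hm0]

/-- The element `X·Yʲ` of `R17 k` (for `j ≤ 3`). -/
noncomputable def g17 (k : Type*) [Field k] (j : ℕ) (hj : j ≤ 3) : ↥(R17 k) :=
  ⟨MvPowerSeries.X 0 * MvPowerSeries.X 1 ^ j, by
    change ∀ m : Fin 2 →₀ ℕ, 3 * m 0 < m 1 →
      MvPowerSeries.coeff m (MvPowerSeries.X 0 * MvPowerSeries.X 1 ^ j : MvPowerSeries (Fin 2) k) = 0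
    intro m hm
    rw [MvPowerSeries.X_pow_eq, MvPowerSeries.X, MvPowerSeries.monomial_mul_monomial, one_mul,
      MvPowerSeries.coeff_monomial, if_neg]
    intro h
    subst h
    simp [Finsupp.single_apply] at hm
    omega⟩

/-- The maximal ideal `m = (X, XY, XY², XY³)` of `R17 k`. -/
noncomputable def m17 (k : Type*) [Field k] : Ideal ↥(R17 k) :=
  Ideal.span {g17 k 0 (by norm_num), g17 k 1 (by norm_num),
    g17 k 2 (by norm_num), g17 k 3 (by norm_num)}

/-- The ideal `I = (XY, XY²)` of `R17 k`. -/
noncomputable def I17 (k : Type*) [Field k] : Ideal ↥(R17 k) :=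
  Ideal.span {g17 k 1 (by norm_num), g17 k 2 (by norm_num)}

open MvPowerSeries

namespace St17
variable {k : Type*} [Field k]

noncomputable def fs (i j : ℕ) : Fin 2 →₀ ℕ := Finsupp.single 0 i + Finsupp.single 1 j

@[simp] lemma fs_apply0 (i j : ℕ) : fs i j 0 = i := by
  simp [fs, Finsupp.single_apply]
@[simp] lemma fs_apply1 (i j : ℕ) : fs i j 1 = j := by
  simp [fs, Finsupp.single_apply]

lemma eq_fs (m : Fin 2 →₀ ℕ) : m = fs (m 0) (m 1) := by
  ext x
  fin_cases x <;> simp [fs, Finsupp.single_apply]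

lemma fs_le_iff {i j : ℕ} {m : Fin 2 →₀ ℕ} : fs i j ≤ m ↔ i ≤ m 0 ∧ j ≤ m 1 := by
  rw [Finsupp.le_def]
  constructor
  · intro h; exact ⟨by simpa using h 0, by simpa using h 1⟩
  · rintro ⟨h0, h1⟩ x; fin_cases x <;> simpa

@[simp] lemma sub_fs_apply0 (m : Fin 2 →₀ ℕ) (i j : ℕ) : (m - fs i j) 0 = m 0 - i := by
  rw [Finsupp.tsub_apply]; simp
@[simp] lemma sub_fs_apply1 (m : Fin 2 →₀ ℕ) (i j : ℕ) : (m - fs i j) 1 = m 1 - j := by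
  rw [Finsupp.tsub_apply]; simp

lemma fs_add (i j i' j' : ℕ) : fs i j + fs i' j' = fs (i+i') (j+j') := by
  ext x; fin_cases x <;> simp

lemma fs_zero : fs 0 0 = 0 := by ext x; fin_cases x <;> simp

lemma mem_R17_iff {f : MvPowerSeries (Fin 2) k} :
    f ∈ R17 k ↔ ∀ m : Fin 2 →₀ ℕ, 3 * m 0 < m 1 → coeff (R := k) m f = 0 := Iff.rfl

lemma g17_val (j : ℕ) (hj : j ≤ 3) : (g17 k j hj).1 = monomial (R := k) (fs 1 j) 1 := by
  show MvPowerSeries.X 0 * MvPowerSeries.X 1 ^ j = _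
  rw [fs, MvPowerSeries.X_pow_eq, MvPowerSeries.X, MvPowerSeries.monomial_mul_monomial, one_mul]

lemma coeff_apply' (f : MvPowerSeries (Fin 2) k) (m : Fin 2 →₀ ℕ) : coeff (R := k) m f = f m := rfl

lemma coeff_monomial_mul' (w : MvPowerSeries (Fin 2) k) (i j : ℕ) (m : Fin 2 →₀ ℕ) :
    coeff (R := k) m (monomial (R := k) (fs i j) 1 * w) =
      if i ≤ m 0 ∧ j ≤ m 1 then coeff (R := k) (m - fs i j) w else 0 := by
  rw [MvPowerSeries.coeff_monomial_mul]
  by_cases h : fs i j ≤ m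
  · rw [if_pos h, if_pos (fs_le_iff.mp h), one_mul]
  · rw [if_neg h, if_neg (fun h' => h (fs_le_iff.mpr h'))]

lemma sub_add_fs (m : Fin 2 →₀ ℕ) (i j : ℕ) (h0 : i ≤ m 0) (h1 : j ≤ m 1) :
    (m - fs i j) + fs i j = m :=
  tsub_add_cancel_of_le (fs_le_iff.mpr ⟨h0, h1⟩)

end St17
namespace St17
variable {k : Type*} [Field k]

/-- constant-coefficient ring hom on `R17`. -/
noncomputable def phi (k : Type*) [Field k] : ↥(R17 k) →+* k :=
  (MvPowerSeries.constantCoeff (σ := Fin 2) (R := k)).comp (Subalgebra.val (R17 k)).toRingHom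

lemma phi_apply (x : ↥(R17 k)) : phi k x = MvPowerSeries.constantCoeff (σ := Fin 2) (R := k) x.1 := rfl

lemma phi_surj : Function.Surjective (phi k) := by
  intro c
  refine ⟨⟨algebraMap k _ c, (R17 k).algebraMap_mem c⟩, ?_⟩
  rw [phi_apply]
  exact MvPowerSeries.constantCoeff_C c

noncomputable def partA (x : MvPowerSeries (Fin 2) k) : MvPowerSeries (Fin 2) k :=
  fun m => if m 1 ≤ 3 * m 0 then coeff (R := k) (m + fs 1 0) x else 0

noncomputable def partB (j : ℕ) (x : MvPowerSeries (Fin 2) k) : MvPowerSeries (Fin 2) k :=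
  fun m => if m 1 = 3 * m 0 then coeff (R := k) (m + fs 1 j) x else 0

lemma coeff_partA (x : MvPowerSeries (Fin 2) k) (m : Fin 2 →₀ ℕ) :
    coeff (R := k) m (partA x) = if m 1 ≤ 3 * m 0 then coeff (R := k) (m + fs 1 0) x else 0 := rfl

lemma coeff_partB (j : ℕ) (x : MvPowerSeries (Fin 2) k) (m : Fin 2 →₀ ℕ) :
    coeff (R := k) m (partB j x) = if m 1 = 3 * m 0 then coeff (R := k) (m + fs 1 j) x else 0 := rfl

lemma partA_mem (x : MvPowerSeries (Fin 2) k) : partA x ∈ R17 k := by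
  rw [mem_R17_iff]
  intro m hm
  rw [coeff_partA, if_neg (by omega)]

lemma partB_mem (j : ℕ) (x : MvPowerSeries (Fin 2) k) : partB j x ∈ R17 k := by
  rw [mem_R17_iff]
  intro m hm
  rw [coeff_partB, if_neg (by omega)]

lemma decomp (x : ↥(R17 k)) (hx : MvPowerSeries.constantCoeff (σ := Fin 2) (R := k) x.1 = 0) :
    (x : MvPowerSeries (Fin 2) k) =
      monomial (R := k) (fs 1 0) 1 * partA x.1 + monomial (R := k) (fs 1 1) 1 * partB 1 x.1 +
      monomial (R := k) (fs 1 2) 1 * partB 2 x.1 + monomial (R := k) (fs 1 3) 1 * partB 3 x.1 := by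
  have hx3 : ∀ m : Fin 2 →₀ ℕ, 3 * m 0 < m 1 → coeff (R := k) m x.1 = 0 := x.2
  have hx0 : coeff (R := k) 0 x.1 = 0 := by
    rw [MvPowerSeries.coeff_zero_eq_constantCoeff]; exact hx
  apply MvPowerSeries.ext
  intro m
  rw [map_add, map_add, map_add, coeff_monomial_mul', coeff_monomial_mul',
    coeff_monomial_mul', coeff_monomial_mul', coeff_partA, coeff_partB, coeff_partB, coeff_partB]
  simp only [sub_fs_apply0, sub_fs_apply1]
  split_ifs
  all_goals try simp only [add_zero, zero_add]
  all_goals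
    first
      | rfl
      | (exfalso; omega)
      | (rw [sub_add_fs m 1 0 (by omega) (by omega)])
      | (rw [sub_add_fs m 1 1 (by omega) (by omega)])
      | (rw [sub_add_fs m 1 2 (by omega) (by omega)])
      | (rw [sub_add_fs m 1 3 (by omega) (by omega)])
      | (exact hx3 m (by omega))
      | (rcases Nat.eq_zero_or_pos (m 1) with hm1 | hm1
         · rw [show m = 0 from by rw [eq_fs m, show m 0 = 0 from by omega, hm1, fs_zero]]
           exact hx0
         · exact hx3 m (by omega))

lemma mem_m17_of (x : ↥(R17 k)) (hx : MvPowerSeries.constantCoeff (σ := Fin 2) (R := k) x.1 = 0) :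
    x ∈ m17 k := by
  have key : x = g17 k 0 (by norm_num) * ⟨partA x.1, partA_mem x.1⟩ +
      g17 k 1 (by norm_num) * ⟨partB 1 x.1, partB_mem 1 x.1⟩ +
      g17 k 2 (by norm_num) * ⟨partB 2 x.1, partB_mem 2 x.1⟩ +
      g17 k 3 (by norm_num) * ⟨partB 3 x.1, partB_mem 3 x.1⟩ := by
    apply Subtype.ext
    push_cast
    rw [g17_val, g17_val, g17_val, g17_val]
    exact decomp x hx
  rw [key, m17]
  refine add_mem (add_mem (add_mem ?_ ?_) ?_) ?_ <;>
    exact Ideal.mul_mem_right _ _ (Ideal.subset_span (by simp))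

lemma m17_eq_ker : m17 k = RingHom.ker (phi k) := by
  apply le_antisymm
  · rw [m17, Ideal.span_le]
    intro g hg
    simp only [Set.mem_insert_iff, Set.mem_singleton_iff] at hg
    have : ∀ (j : ℕ) (hj : j ≤ 3), g17 k j hj ∈ RingHom.ker (phi k) := by
      intro j hj
      rw [RingHom.mem_ker, phi_apply, g17_val, ← MvPowerSeries.coeff_zero_eq_constantCoeff,
        MvPowerSeries.coeff_monomial, if_neg]
      intro h
      have h0 := fs_apply0 1 j
      rw [← h] at h0
      simp at h0
    rcases hg with h | h | h | h <;> (rw [h]; exact this _ _)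
  · intro x hx
    exact mem_m17_of x (by rwa [RingHom.mem_ker, phi_apply] at hx)

lemma m17_isMaximal : (m17 k).IsMaximal := by
  rw [m17_eq_ker]
  exact RingHom.ker_isMaximal_of_surjective (phi k) phi_surj

lemma one_not_mem_m17 : (1 : ↥(R17 k)) ∉ m17 k := by
  rw [m17_eq_ker, RingHom.mem_ker, map_one]
  exact one_ne_zero

end St17
namespace St17
variable {k : Type*} [Field k]

lemma coeff_mul_monomial' (w : MvPowerSeries (Fin 2) k) (i j : ℕ) (m : Fin 2 →₀ ℕ) :
    coeff (R := k) m (w * monomial (R := k) (fs i j) 1) =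
      if i ≤ m 0 ∧ j ≤ m 1 then coeff (R := k) (m - fs i j) w else 0 := by
  rw [MvPowerSeries.coeff_mul_monomial]
  by_cases h : fs i j ≤ m
  · rw [if_pos h, if_pos (fs_le_iff.mp h), mul_one]
  · rw [if_neg h, if_neg (fun h' => h (fs_le_iff.mpr h'))]

lemma monomial_pow' (i j n : ℕ) :
    (monomial (R := k) (fs i j) 1) ^ n = monomial (R := k) (fs (n*i) (n*j)) 1 := by
  induction n with
  | zero => simp only [pow_zero, Nat.zero_mul, fs_zero, MvPowerSeries.monomial_zero_one]
  | succ n ih =>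
      rw [pow_succ, ih, MvPowerSeries.monomial_mul_monomial, fs_add, one_mul]
      congr 1 <;> ring_nf

/-- Case `w(u) ≥ 2`, with `t = XY³`. -/
lemma caseXY3 (u' A r' : MvPowerSeries (Fin 2) k) (n : ℕ)
    (hs : ∀ m : Fin 2 →₀ ℕ, 3 * m 0 ≤ m 1 + 1 → coeff (R := k) m u' = 0)
    (hA : ∀ p : Fin 2 →₀ ℕ, 3 * p 0 + 1 < p 1 → coeff (R := k) p A = 0)
    (hE : A * u' + r' * monomial (R := k) (fs (n+1) (3*(n+1))) 1 = monomial (R := k) (fs n (3*n)) 1) :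
    False := by
  have hc := congrArg (coeff (R := k) (fs n (3*n))) hE
  rw [map_add, MvPowerSeries.coeff_monomial_same, coeff_mul_monomial',
    if_neg (by simp only [fs_apply0, fs_apply1]; omega)] at hc
  rw [MvPowerSeries.coeff_mul, Finset.sum_eq_zero, zero_add] at hc
  · exact one_ne_zero hc.symm
  · rintro ⟨p, q⟩ hpq
    rw [Finset.HasAntidiagonal.mem_antidiagonal] at hpq
    have e0 : p 0 + q 0 = n := by
      have : (p + q) 0 = (fs n (3*n)) 0 := by rw [hpq]
      simpa using this
    have e1 : p 1 + q 1 = 3*n := by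
      have : (p + q) 1 = (fs n (3*n)) 1 := by rw [hpq]
      simpa using this
    by_cases h1 : 3 * p 0 + 1 < p 1
    · rw [hA p h1, zero_mul]
    · rw [hs q (by omega), mul_zero]

/-- Case `w(u) = 1`, with `t = X`. -/
lemma caseX (u' A r' : MvPowerSeries (Fin 2) k) (n : ℕ)
    (hu1 : ∀ m : Fin 2 →₀ ℕ, coeff (R := k) m u' ≠ 0 → m 1 + 1 ≤ 3 * m 0)
    (i₁ j₁ : ℕ) (h3i₁ : 3 * i₁ = j₁ + 1) (hU1 : coeff (R := k) (fs i₁ j₁) u' ≠ 0)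
    (hi1min : ∀ i j : ℕ, 3 * i = j + 1 → coeff (R := k) (fs i j) u' ≠ 0 → i₁ ≤ i)
    (hA : ∀ p : Fin 2 →₀ ℕ, coeff (R := k) p A ≠ 0 → p 1 ≤ 3 * p 0 + 1)
    (hr : ∀ m : Fin 2 →₀ ℕ, 3 * m 0 < m 1 → coeff (R := k) m r' = 0)
    (hE : A * u' + r' * monomial (R := k) (fs (n+1) 0) 1 = monomial (R := k) (fs n 0) 1) : False := by
  classical
  -- A ≠ 0
  have hA0 : A ≠ 0 := by
    intro h
    have hc := congrArg (coeff (R := k) (fs n 0)) hE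
    rw [h, zero_mul, map_add, map_zero, zero_add, MvPowerSeries.coeff_monomial_same,
      coeff_mul_monomial', if_neg (by simp only [fs_apply0, fs_apply1]; omega)] at hc
    exact one_ne_zero hc.symm
  -- minimal τ₀
  have hexA : ∃ τ : ℕ, ∃ i j : ℕ, 3*i + 1 = j + τ ∧ coeff (R := k) (fs i j) A ≠ 0 := by
    have : ∃ p : Fin 2 →₀ ℕ, coeff (R := k) p A ≠ 0 := by
      by_contra h
      push_neg at h
      exact hA0 (MvPowerSeries.ext fun p => by rw [h p, map_zero])
    obtain ⟨p, hp⟩ := this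
    refine ⟨3 * p 0 + 1 - p 1, p 0, p 1, by have := hA p hp; omega, by rwa [← eq_fs]⟩
  set τ₀ := Nat.find hexA with hτ₀def
  obtain ⟨i₂x, j₂x, hijx, hA2x⟩ := Nat.find_spec hexA
  have hτmin : ∀ p : Fin 2 →₀ ℕ, coeff (R := k) p A ≠ 0 → p 1 + τ₀ ≤ 3 * p 0 + 1 := by
    intro p hp
    have h1 : τ₀ ≤ 3 * p 0 + 1 - p 1 :=
      Nat.find_min' hexA ⟨p 0, p 1, by have := hA p hp; omega, by rwa [← eq_fs]⟩
    have := hA p hp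
    omega
  -- minimal i₂ on the τ₀ line
  have hexA2 : ∃ i : ℕ, ∃ j : ℕ, 3*i + 1 = j + τ₀ ∧ coeff (R := k) (fs i j) A ≠ 0 :=
    ⟨i₂x, j₂x, hijx, hA2x⟩
  set i₂ := Nat.find hexA2 with hi₂def
  obtain ⟨j₂, hij₂, hA2⟩ := Nat.find_spec hexA2
  have hi2min : ∀ i j : ℕ, 3*i + 1 = j + τ₀ → coeff (R := k) (fs i j) A ≠ 0 → i₂ ≤ i :=
    fun i j h1 h2 => Nat.find_min' hexA2 ⟨j, h1, h2⟩
  -- τ₀ ≤ 3n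
  have hτn : τ₀ ≤ 3 * n := by
    have hc := congrArg (coeff (R := k) (fs n 0)) hE
    rw [map_add, MvPowerSeries.coeff_monomial_same, coeff_mul_monomial',
      if_neg (by simp only [fs_apply0, fs_apply1]; omega), add_zero] at hc
    have hne : coeff (R := k) (fs n 0) (A * u') ≠ 0 := by rw [hc]; exact one_ne_zero
    rw [MvPowerSeries.coeff_mul] at hne
    obtain ⟨⟨p, q⟩, hmem, hne2⟩ := Finset.exists_ne_zero_of_sum_ne_zero hne
    rw [Finset.HasAntidiagonal.mem_antidiagonal] at hmem
    have e0 : p 0 + q 0 = n := by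
      have : (p + q) 0 = (fs n 0) 0 := by rw [hmem]
      simpa using this
    have e1 : p 1 + q 1 = 0 := by
      have : (p + q) 1 = (fs n 0) 1 := by rw [hmem]
      simpa using this
    have h1 := hτmin p (left_ne_zero_of_mul hne2)
    have h2 := hu1 q (right_ne_zero_of_mul hne2)
    omega
  -- the witness monomial
  have hterm2 : coeff (R := k) (fs (i₁ + i₂) (j₁ + j₂)) (r' * monomial (R := k) (fs (n+1) 0) 1) = 0 := by
    rw [coeff_mul_monomial']
    by_cases hcond : (n+1 ≤ (fs (i₁ + i₂) (j₁ + j₂)) 0 ∧ 0 ≤ (fs (i₁ + i₂) (j₁ + j₂)) 1)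
    · rw [if_pos hcond]
      apply hr
      simp only [sub_fs_apply0, sub_fs_apply1, fs_apply0, fs_apply1]
      simp only [fs_apply0, fs_apply1] at hcond
      omega
    · rw [if_neg hcond]
  have hrhs : coeff (R := k) (fs (i₁ + i₂) (j₁ + j₂)) (monomial (R := k) (fs n 0) 1) = 0 := by
    rw [MvPowerSeries.coeff_monomial, if_neg]
    intro h
    have h0 : i₁ + i₂ = n := by
      have := congrArg (fun z : Fin 2 →₀ ℕ => z 0) h
      simpa using this
    have h1 : j₁ + j₂ = 0 := by
      have := congrArg (fun z : Fin 2 →₀ ℕ => z 1) h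
      simpa using this
    omega
  have hterm1 : coeff (R := k) (fs (i₁ + i₂) (j₁ + j₂)) (A * u') =
      coeff (R := k) (fs i₂ j₂) A * coeff (R := k) (fs i₁ j₁) u' := by
    rw [MvPowerSeries.coeff_mul]
    apply Finset.sum_eq_single_of_mem ((fs i₂ j₂, fs i₁ j₁) : (Fin 2 →₀ ℕ) × (Fin 2 →₀ ℕ))
    · rw [Finset.HasAntidiagonal.mem_antidiagonal, fs_add]
      congr 1 <;> omega
    · rintro ⟨p, q⟩ hmem hne
      rw [Finset.HasAntidiagonal.mem_antidiagonal] at hmem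
      have e0 : p 0 + q 0 = i₁ + i₂ := by
        have : (p + q) 0 = (fs (i₁+i₂) (j₁+j₂)) 0 := by rw [hmem]
        simpa using this
      have e1 : p 1 + q 1 = j₁ + j₂ := by
        have : (p + q) 1 = (fs (i₁+i₂) (j₁+j₂)) 1 := by rw [hmem]
        simpa using this
      by_contra h0
      have hp := left_ne_zero_of_mul h0
      have hq := right_ne_zero_of_mul h0
      have c1 := hτmin p hp
      have c2 := hu1 q hq
      have d1 : 3 * p 0 + 1 = p 1 + τ₀ := by omega
      have d2 : 3 * q 0 = q 1 + 1 := by omega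
      have m1 : i₂ ≤ p 0 := hi2min (p 0) (p 1) (by omega) (by rwa [← eq_fs])
      have m2 : i₁ ≤ q 0 := hi1min (q 0) (q 1) (by omega) (by rwa [← eq_fs])
      have hp0 : p 0 = i₂ := by omega
      have hq0 : q 0 = i₁ := by omega
      have hp1 : p 1 = j₂ := by omega
      have hq1 : q 1 = j₁ := by omega
      apply hne
      have hpp : p = fs i₂ j₂ := by rw [eq_fs p, hp0, hp1]
      have hqq : q = fs i₁ j₁ := by rw [eq_fs q, hq0, hq1]
      rw [hpp, hqq]
  have hc := congrArg (coeff (R := k) (fs (i₁ + i₂) (j₁ + j₂))) hE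
  rw [map_add, hterm1, hterm2, hrhs, add_zero] at hc
  exact mul_ne_zero hA2 hU1 hc

end St17
namespace St17
variable {k : Type*} [Field k]

@[simp] lemma add_fs_apply0 (m : Fin 2 →₀ ℕ) (i j : ℕ) : (m + fs i j) 0 = m 0 + i := by
  rw [Finsupp.add_apply]; simp
@[simp] lemma add_fs_apply1 (m : Fin 2 →₀ ℕ) (i j : ℕ) : (m + fs i j) 1 = m 1 + j := by
  rw [Finsupp.add_apply]; simp

lemma extract (u v t : ↥(R17 k)) (n : ℕ)
    (h : t ^ n ∈ (Submodule.span (↥(R17 k)) {u, v} ⊔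
        Submodule.span (↥(R17 k)) {t ^ (n+1)} : Submodule (↥(R17 k)) (↥(R17 k)))) :
    ∃ a b r : ↥(R17 k), a * u + b * v + r * t^(n+1) = t ^ n := by
  rw [Submodule.mem_sup] at h
  obtain ⟨y, hy, z, hz, hyz⟩ := h
  rw [Submodule.mem_span_pair] at hy
  obtain ⟨a, b, hab⟩ := hy
  rw [Submodule.mem_span_singleton] at hz
  obtain ⟨r, hr⟩ := hz
  refine ⟨a, b, r, ?_⟩
  rw [← hyz, ← hab, ← hr]
  simp only [smul_eq_mul]

lemma key (u v : ↥(R17 k)) (hv : (v : MvPowerSeries (Fin 2) k) = monomial (R := k) (fs 0 1) 1 * u.1) :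
    ∃ t : ↥(R17 k), ∀ n : ℕ,
      t ^ n ∉ (Submodule.span (↥(R17 k)) {u, v} ⊔
        Submodule.span (↥(R17 k)) {t ^ (n+1)} : Submodule (↥(R17 k)) (↥(R17 k))) := by
  classical
  have hu' : ∀ m : Fin 2 →₀ ℕ, 3 * m 0 ≤ m 1 → coeff (R := k) m u.1 = 0 := by
    intro m hm
    have h1 : coeff (R := k) (m + fs 0 1) ((monomial (R := k) (fs 0 1) 1) * u.1) = coeff (R := k) m u.1 := by
      rw [coeff_monomial_mul', if_pos (by simp), add_tsub_cancel_right]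
    rw [← h1, ← hv]
    exact v.2 (m + fs 0 1) (by simp; omega)
  by_cases hu0 : (u : MvPowerSeries (Fin 2) k) = 0
  · refine ⟨g17 k 0 (by norm_num), fun n hmem => ?_⟩
    obtain ⟨a, b, r, hE⟩ := extract u v _ n hmem
    have hE' := congrArg (Subtype.val) hE
    push_cast at hE'
    rw [g17_val, monomial_pow', monomial_pow', hu0, hv, hu0, mul_zero, mul_zero, mul_zero,
      zero_add, zero_add] at hE'
    have hc := congrArg (coeff (R := k) (fs (n*1) (n*0))) hE'
    rw [MvPowerSeries.coeff_monomial_same, coeff_mul_monomial',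
      if_neg (by simp only [fs_apply0, fs_apply1]; omega)] at hc
    exact one_ne_zero hc.symm
  · have hexU0 : ∃ s : ℕ, ∃ i j : ℕ, 3*i = j + s ∧ coeff (R := k) (fs i j) u.1 ≠ 0 := by
      have h1 : ∃ m : Fin 2 →₀ ℕ, coeff (R := k) m u.1 ≠ 0 := by
        by_contra h
        push_neg at h
        exact hu0 (MvPowerSeries.ext fun p => by rw [h p, map_zero])
      obtain ⟨m, hm⟩ := h1
      have h2 : ¬ (3 * m 0 ≤ m 1) := fun hh => hm (hu' m hh)
      exact ⟨3 * m 0 - m 1, m 0, m 1, by omega, by rwa [← eq_fs]⟩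
    set s₀ := Nat.find hexU0 with hs₀def
    obtain ⟨iw, jw, hw1, hw2⟩ := Nat.find_spec hexU0
    have hsmin : ∀ m : Fin 2 →₀ ℕ, coeff (R := k) m u.1 ≠ 0 → m 1 + s₀ ≤ 3 * m 0 := by
      intro m hm
      have h2 : ¬ (3 * m 0 ≤ m 1) := fun hh => hm (hu' m hh)
      have h1 : s₀ ≤ 3 * m 0 - m 1 :=
        Nat.find_min' hexU0 ⟨m 0, m 1, by omega, by rwa [← eq_fs]⟩
      omega
    have hs₀pos : 1 ≤ s₀ := by
      have h2 : ¬ (3 * iw ≤ jw) := by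
        intro hh
        exact hw2 (hu' (fs iw jw) (by simpa using hh))
      omega
    -- the A-support fact, used in both branches
    have hAsupp : ∀ (a b : ↥(R17 k)) (p : Fin 2 →₀ ℕ), 3 * p 0 + 1 < p 1 →
        coeff (R := k) p (a.1 + b.1 * monomial (R := k) (fs 0 1) 1) = 0 := by
      intro a b p hp
      rw [map_add, a.2 p (by omega), coeff_mul_monomial', zero_add]
      by_cases hc : (0 ≤ p 0 ∧ 1 ≤ p 1)
      · rw [if_pos hc]
        exact b.2 _ (by simp only [sub_fs_apply0, sub_fs_apply1]; omega)
      · rw [if_neg hc]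
    by_cases hs2 : 2 ≤ s₀
    · refine ⟨g17 k 3 (by norm_num), fun n hmem => ?_⟩
      obtain ⟨a, b, r, hE⟩ := extract u v _ n hmem
      have hE' := congrArg (Subtype.val) hE
      push_cast at hE'
      rw [g17_val, monomial_pow', monomial_pow', hv] at hE'
      have e1 : fs ((n+1)*1) ((n+1)*3) = fs (n+1) (3*(n+1)) := by congr 1 <;> ring
      have e2 : fs (n*1) (n*3) = fs n (3*n) := by congr 1 <;> ring
      rw [e1, e2] at hE'
      refine caseXY3 u.1 (a.1 + b.1 * monomial (R := k) (fs 0 1) 1) r.1 n ?_ (hAsupp a b) ?_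
      · intro m hm
        by_contra hc
        have := hsmin m hc
        omega
      · rw [← hE']
        ring
    · refine ⟨g17 k 0 (by norm_num), fun n hmem => ?_⟩
      obtain ⟨a, b, r, hE⟩ := extract u v _ n hmem
      have hE' := congrArg (Subtype.val) hE
      push_cast at hE'
      rw [g17_val, monomial_pow', monomial_pow', hv] at hE'
      have e1 : fs ((n+1)*1) ((n+1)*0) = fs (n+1) 0 := by congr 1 <;> ring
      have e2 : fs (n*1) (n*0) = fs n 0 := by congr 1 <;> ring
      rw [e1, e2] at hE'
      have hs1 : s₀ = 1 := by omega
      have hexU1 : ∃ i : ℕ, ∃ j : ℕ, 3*i = j + 1 ∧ coeff (R := k) (fs i j) u.1 ≠ 0 :=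
        ⟨iw, jw, by omega, hw2⟩
      set i₁ := Nat.find hexU1 with hi₁def
      obtain ⟨j₁, h3, hne⟩ := Nat.find_spec hexU1
      refine caseX u.1 (a.1 + b.1 * monomial (R := k) (fs 0 1) 1) r.1 n ?_ i₁ j₁ h3 hne ?_ ?_ r.2 ?_
      · intro m hm
        have := hsmin m hm
        omega
      · exact fun i j h1 h2 => Nat.find_min' hexU1 ⟨j, h1, h2⟩
      · intro p hp
        by_contra hc
        exact hp (hAsupp a b p (by omega))
      · rw [← hE']
        ring
end St17
namespace St17

lemma modLength_top {R M : Type*} [CommRing R] [AddCommGroup M] [Module R M]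
    (h : ∀ N : ℕ, ∃ s : RelSeries {p : Submodule R M × Submodule R M | p.1 < p.2},
      s.length = N) : modLength R M = ⊤ := by
  rw [modLength]
  by_contra hne
  obtain ⟨n, hn⟩ := WithTop.ne_top_iff_exists.mp hne
  obtain ⟨s, hs⟩ := h (n+1)
  have h1 : ((s.length : ℕ) : ℕ∞) ≤
      ⨆ s : RelSeries {p : Submodule R M × Submodule R M | p.1 < p.2}, (s.length : ℕ∞) :=
    le_iSup (fun s : RelSeries {p : Submodule R M × Submodule R M | p.1 < p.2} =>
      (s.length : ℕ∞)) s
  rw [hs, ← hn] at h1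
  have h2 : n + 1 ≤ n := Nat.cast_le.mp h1
  omega

lemma exists_chain_quot {R : Type*} [CommRing R] (J : Submodule R R) (t : R)
    (hstrict : ∀ n : ℕ, t ^ n ∉ (J ⊔ Submodule.span R {t ^ (n+1)} : Submodule R R)) (N : ℕ) :
    ∃ s : RelSeries {p : Submodule R (R ⧸ J) × Submodule R (R ⧸ J) | p.1 < p.2},
      s.length = N := by
  refine ⟨⟨N, fun i => Submodule.map J.mkQ (J ⊔ Submodule.span R {t ^ (N - (i : ℕ))}), ?_⟩, rfl⟩
  intro i
  simp only [Fin.coe_castSucc, Fin.val_succ]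
  set n := N - ((i : ℕ) + 1) with hn
  have hi : (i : ℕ) < N := i.2
  have hNi : N - (i : ℕ) = n + 1 := by omega
  rw [hNi]
  rw [Set.mem_setOf_eq, SetLike.lt_iff_le_and_exists]
  constructor
  · apply Submodule.map_mono
    apply sup_le_sup_left
    rw [Submodule.span_le, Set.singleton_subset_iff]
    rw [SetLike.mem_coe, Submodule.mem_span_singleton]
    exact ⟨t, by rw [smul_eq_mul, ← pow_succ']⟩
  · refine ⟨J.mkQ (t ^ n), Submodule.mem_map_of_mem
      (Submodule.mem_sup_right (Submodule.mem_span_singleton_self _)), ?_⟩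
    intro hmem
    rw [Submodule.mem_map] at hmem
    obtain ⟨w, hw, hwq⟩ := hmem
    have hsub : w - t ^ n ∈ J := by
      rw [← Submodule.Quotient.eq J]
      exact hwq
    apply hstrict n
    have : t ^ n = w - (w - t ^ n) := by ring
    rw [this]
    exact Submodule.sub_mem _ hw (Submodule.mem_sup_left hsub)

end St17
namespace St17
variable {k : Type*} [Field k]

noncomputable def gI1 (k : Type*) [Field k] : ↥(I17 k) :=
  ⟨g17 k 1 (by norm_num), Ideal.subset_span (by simp)⟩
noncomputable def gI2 (k : Type*) [Field k] : ↥(I17 k) :=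
  ⟨g17 k 2 (by norm_num), Ideal.subset_span (by simp)⟩

lemma range_eq (f : ↥(I17 k) →ₗ[↥(R17 k)] ↥(R17 k)) :
    LinearMap.range f = Submodule.span (↥(R17 k)) {f (gI1 k), f (gI2 k)} := by
  apply le_antisymm
  · rintro _ ⟨x, rfl⟩
    have hx : (x : ↥(R17 k)) ∈ Ideal.span {g17 k 1 (by norm_num), g17 k 2 (by norm_num)} := x.2
    rw [Ideal.mem_span_pair] at hx
    obtain ⟨a, b, hab⟩ := hx
    have hx2 : a • gI1 k + b • gI2 k = x := by
      apply Subtype.ext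
      simp only [Submodule.coe_add, SetLike.val_smul, smul_eq_mul]
      exact hab
    rw [← hx2, map_add, map_smul, map_smul]
    exact Submodule.add_mem _
      (Submodule.smul_mem _ a (Submodule.subset_span (by simp)))
      (Submodule.smul_mem _ b (Submodule.subset_span (by simp)))
  · rw [Submodule.span_le]
    rintro y hy
    simp only [Set.mem_insert_iff, Set.mem_singleton_iff] at hy
    rcases hy with h | h <;> (rw [h]; exact ⟨_, rfl⟩)

lemma monomial_fs11_ne : (monomial (R := k) (fs 1 1) 1 : MvPowerSeries (Fin 2) k) ≠ 0 := by
  intro h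
  have h1 := MvPowerSeries.coeff_monomial_same (R := k) (fs 1 1) 1
  rw [h, map_zero] at h1
  exact one_ne_zero h1.symm

lemma relation (f : ↥(I17 k) →ₗ[↥(R17 k)] ↥(R17 k)) :
    ((f (gI2 k)) : MvPowerSeries (Fin 2) k) = monomial (R := k) (fs 0 1) 1 * (f (gI1 k)).1 := by
  have h0 : g17 k 2 (by norm_num) • gI1 k = g17 k 1 (by norm_num) • gI2 k := by
    apply Subtype.ext
    simp only [SetLike.val_smul, smul_eq_mul]
    show g17 k 2 (by norm_num) * g17 k 1 (by norm_num) = _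
    rw [mul_comm]
    rfl
  have h1 := congrArg f h0
  rw [map_smul, map_smul] at h1
  have h2 := congrArg (Subtype.val) h1
  simp only [SetLike.val_smul, smul_eq_mul] at h2
  push_cast at h2
  rw [g17_val, g17_val] at h2
  apply mul_left_cancel₀ (monomial_fs11_ne (k := k))
  rw [← mul_assoc, MvPowerSeries.monomial_mul_monomial, one_mul, fs_add]
  rw [show fs (1+0) (1+1) = fs 1 2 from by norm_num]
  exact h2.symm

lemma usupp (u v : ↥(R17 k)) (hv : (v : MvPowerSeries (Fin 2) k) = monomial (R := k) (fs 0 1) 1 * u.1) :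
    ∀ m : Fin 2 →₀ ℕ, 3 * m 0 ≤ m 1 → coeff (R := k) m u.1 = 0 := by
  intro m hm
  have h1 : coeff (R := k) (m + fs 0 1) ((monomial (R := k) (fs 0 1) 1) * u.1) = coeff (R := k) m u.1 := by
    rw [coeff_monomial_mul', if_pos (by simp), add_tsub_cancel_right]
  rw [← h1, ← hv]
  exact v.2 (m + fs 0 1) (by simp; omega)

/-- Part 3: `h(I) = ∞`. -/
lemma part3 : hInv ↥(R17 k) ↥(I17 k) = ⊤ := by
  rw [hInv, iInf_eq_top]
  intro f
  obtain ⟨t, ht⟩ := key (f (gI1 k)) (f (gI2 k)) (relation f)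
  have ht' : ∀ n : ℕ, t ^ n ∉
      (LinearMap.range f ⊔ Submodule.span (↥(R17 k)) {t ^ (n+1)} :
        Submodule (↥(R17 k)) (↥(R17 k))) := by
    rw [range_eq f]
    exact ht
  apply modLength_top
  intro N
  exact exists_chain_quot (LinearMap.range f) t ht' N

end St17
open MvPowerSeries
namespace St17
variable {k : Type*} [Field k]

lemma trace_le : traceIdeal ↥(R17 k) ↥(I17 k) ≤ m17 k := by
  rw [traceIdeal]
  apply iSup_le
  intro f
  rw [range_eq f, Submodule.span_le]
  rintro y hy
  have hv := relation f
  have hu0 : MvPowerSeries.constantCoeff (σ := Fin 2) (R := k) (f (gI1 k)).1 = 0 := by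
    rw [← MvPowerSeries.coeff_zero_eq_constantCoeff]
    exact usupp _ _ hv 0 (by simp)
  have hv0 : MvPowerSeries.constantCoeff (σ := Fin 2) (R := k) (f (gI2 k)).1 = 0 := by
    rw [← MvPowerSeries.coeff_zero_eq_constantCoeff, hv, coeff_monomial_mul', if_neg (by simp)]
  simp only [Set.mem_insert_iff, Set.mem_singleton_iff, SetLike.mem_coe] at hy
  rcases hy with h | h
  · rw [h]; exact mem_m17_of _ hu0
  · rw [h]; exact mem_m17_of _ hv0

lemma mulY_mem (x : ↥(R17 k)) (hx : x ∈ I17 k) :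
    monomial (R := k) (fs 0 1) 1 * (x : MvPowerSeries (Fin 2) k) ∈ R17 k := by
  have h2 : (monomial (R := k) (fs 1 2) 1 : MvPowerSeries (Fin 2) k) ∈ R17 k := by
    rw [← g17_val 2 (by norm_num)]; exact (g17 k 2 (by norm_num)).2
  have h3 : (monomial (R := k) (fs 1 3) 1 : MvPowerSeries (Fin 2) k) ∈ R17 k := by
    rw [← g17_val 3 (by norm_num)]; exact (g17 k 3 (by norm_num)).2
  refine Submodule.span_induction ?_ ?_ ?_ ?_ hx
  · rintro g hg
    simp only [Set.mem_insert_iff, Set.mem_singleton_iff] at hg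
    rcases hg with h | h <;> subst h
    · rw [g17_val, MvPowerSeries.monomial_mul_monomial, one_mul, fs_add,
        show (0+1:ℕ) = 1 from rfl, show (1+1:ℕ) = 2 from rfl]
      exact h2
    · rw [g17_val, MvPowerSeries.monomial_mul_monomial, one_mul, fs_add,
        show (0+1:ℕ) = 1 from rfl, show (1+2:ℕ) = 3 from rfl]
      exact h3
  · simp only [ZeroMemClass.coe_zero, mul_zero]
    exact (R17 k).zero_mem
  · intro a b _ _ ha hb
    push_cast
    rw [mul_add]
    exact (R17 k).add_mem ha hb
  · intro r a _ ha
    simp only [SetLike.val_smul, smul_eq_mul]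
    push_cast
    rw [mul_left_comm]
    exact (R17 k).mul_mem r.2 ha

noncomputable def fY (k : Type*) [Field k] : ↥(I17 k) →ₗ[↥(R17 k)] ↥(R17 k) where
  toFun x := ⟨monomial (R := k) (fs 0 1) 1 * ((x : ↥(R17 k)) : MvPowerSeries (Fin 2) k),
    mulY_mem x.1 x.2⟩
  map_add' x y := by
    apply Subtype.ext
    push_cast
    ring
  map_smul' c x := by
    apply Subtype.ext
    simp only [SetLike.val_smul, smul_eq_mul, RingHom.id_apply]
    push_cast
    ring

noncomputable def shiftY (x : MvPowerSeries (Fin 2) k) : MvPowerSeries (Fin 2) k :=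
  fun m => coeff (R := k) (m + fs 0 1) x

lemma coeff_shiftY (x : MvPowerSeries (Fin 2) k) (m : Fin 2 →₀ ℕ) :
    coeff (R := k) m (shiftY x) = coeff (R := k) (m + fs 0 1) x := rfl

lemma shiftY_mulY (w : MvPowerSeries (Fin 2) k) : shiftY (monomial (R := k) (fs 0 1) 1 * w) = w := by
  apply MvPowerSeries.ext
  intro m
  rw [coeff_shiftY, coeff_monomial_mul', if_pos (by simp), add_tsub_cancel_right]

lemma shiftY_add (x y : MvPowerSeries (Fin 2) k) : shiftY (x + y) = shiftY x + shiftY y := by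
  apply MvPowerSeries.ext
  intro m
  rw [map_add, coeff_shiftY, coeff_shiftY, coeff_shiftY, map_add]

lemma shiftY_zero : shiftY (0 : MvPowerSeries (Fin 2) k) = 0 := by
  apply MvPowerSeries.ext
  intro m
  rw [coeff_shiftY, map_zero, map_zero]

lemma shiftY_monomial (i j : ℕ) (hj : 1 ≤ j) :
    shiftY (monomial (R := k) (fs i j) 1) = monomial (R := k) (fs i (j-1)) 1 := by
  apply MvPowerSeries.ext
  intro m
  rw [coeff_shiftY, MvPowerSeries.coeff_monomial, MvPowerSeries.coeff_monomial]
  by_cases h : m = fs i (j-1)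
  · rw [if_pos h, if_pos]
    rw [h, fs_add]
    congr 1
    omega
  · rw [if_neg _, if_neg h]
    intro heq
    apply h
    have e0 : m 0 + 0 = i := by
      have := congrArg (fun z : Fin 2 →₀ ℕ => z 0) heq
      simpa using this
    have e1 : m 1 + 1 = j := by
      have := congrArg (fun z : Fin 2 →₀ ℕ => z 1) heq
      simpa using this
    rw [eq_fs m]
    congr 1 <;> omega

lemma shiftY_prop (x : ↥(R17 k)) (hx : x ∈ I17 k) :
    monomial (R := k) (fs 0 1) 1 * shiftY (x : MvPowerSeries (Fin 2) k) = (x : MvPowerSeries (Fin 2) k)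
      ∧ shiftY (x : MvPowerSeries (Fin 2) k) ∈ R17 k := by
  refine Submodule.span_induction ?_ ?_ ?_ ?_ hx
  · rintro g hg
    simp only [Set.mem_insert_iff, Set.mem_singleton_iff] at hg
    have h0 : (monomial (R := k) (fs 1 0) 1 : MvPowerSeries (Fin 2) k) ∈ R17 k := by
      rw [← g17_val 0 (by norm_num)]; exact (g17 k 0 (by norm_num)).2
    have h1 : (monomial (R := k) (fs 1 1) 1 : MvPowerSeries (Fin 2) k) ∈ R17 k := by
      rw [← g17_val 1 (by norm_num)]; exact (g17 k 1 (by norm_num)).2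
    rcases hg with h | h <;> subst h
    · rw [g17_val, shiftY_monomial 1 1 (by norm_num),
        MvPowerSeries.monomial_mul_monomial, one_mul, fs_add]
      exact ⟨by first | rfl | trivial, h0⟩
    · rw [g17_val, shiftY_monomial 1 2 (by norm_num),
        MvPowerSeries.monomial_mul_monomial, one_mul, fs_add]
      exact ⟨by first | rfl | trivial, h1⟩
  · simp only [ZeroMemClass.coe_zero, shiftY_zero, mul_zero]
    exact ⟨trivial, (R17 k).zero_mem⟩
  · intro a b _ _ ha hb
    push_cast
    rw [shiftY_add, mul_add, ha.1, hb.1]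
    exact ⟨by first | rfl | trivial, (R17 k).add_mem ha.2 hb.2⟩
  · intro r a _ ha
    simp only [SetLike.val_smul, smul_eq_mul]
    push_cast
    obtain ⟨h1, h2⟩ := ha
    have key : monomial (R := k) (fs 0 1) 1 * ((r : MvPowerSeries (Fin 2) k) * shiftY a.1)
        = (r : MvPowerSeries (Fin 2) k) * (a : MvPowerSeries (Fin 2) k) := by
      rw [mul_left_comm, h1]
    have hsh : shiftY ((r : MvPowerSeries (Fin 2) k) * (a : MvPowerSeries (Fin 2) k))
        = (r : MvPowerSeries (Fin 2) k) * shiftY a.1 := by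
      rw [← key, shiftY_mulY]
    rw [hsh]
    exact ⟨key, (R17 k).mul_mem r.2 h2⟩

noncomputable def fDivY (k : Type*) [Field k] : ↥(I17 k) →ₗ[↥(R17 k)] ↥(R17 k) where
  toFun x := ⟨shiftY ((x : ↥(R17 k)) : MvPowerSeries (Fin 2) k), (shiftY_prop x.1 x.2).2⟩
  map_add' x y := by
    apply Subtype.ext
    push_cast
    exact shiftY_add _ _
  map_smul' c x := by
    apply Subtype.ext
    simp only [SetLike.val_smul, smul_eq_mul, RingHom.id_apply]
    push_cast
    obtain ⟨h1, h2⟩ := shiftY_prop x.1 x.2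
    have key : monomial (R := k) (fs 0 1) 1 *
          ((c : MvPowerSeries (Fin 2) k) * shiftY ((x : ↥(R17 k)) : MvPowerSeries (Fin 2) k))
        = (c : MvPowerSeries (Fin 2) k) * ((x : ↥(R17 k)) : MvPowerSeries (Fin 2) k) := by
      rw [mul_left_comm, h1]
    rw [← key, shiftY_mulY]

lemma trace_ge : m17 k ≤ traceIdeal ↥(R17 k) ↥(I17 k) := by
  rw [m17, Ideal.span_le]
  rintro g hg
  have hsub : ∀ F : ↥(I17 k) →ₗ[↥(R17 k)] ↥(R17 k),
      LinearMap.range F ≤ traceIdeal ↥(R17 k) ↥(I17 k) := fun F =>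
    le_iSup (fun f : ↥(I17 k) →ₗ[↥(R17 k)] ↥(R17 k) => LinearMap.range f) F
  simp only [Set.mem_insert_iff, Set.mem_singleton_iff] at hg
  rcases hg with h | h | h | h <;> rw [h] <;> clear h
  · refine hsub (fDivY k) ⟨gI1 k, ?_⟩
    apply Subtype.ext
    show shiftY _ = _
    rw [show ((gI1 k : ↥(R17 k)) : MvPowerSeries (Fin 2) k) = monomial (R := k) (fs 1 1) 1 from
      g17_val 1 (by norm_num), g17_val, shiftY_monomial 1 1 (by norm_num),
      show (1:ℕ)-1 = 0 from rfl]
  · exact hsub ((I17 k).subtype) ⟨gI1 k, rfl⟩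
  · exact hsub ((I17 k).subtype) ⟨gI2 k, rfl⟩
  · refine hsub (fY k) ⟨gI2 k, ?_⟩
    apply Subtype.ext
    show monomial (R := k) (fs 0 1) 1 * _ = _
    rw [show ((gI2 k : ↥(R17 k)) : MvPowerSeries (Fin 2) k) = monomial (R := k) (fs 1 2) 1 from
      g17_val 2 (by norm_num), g17_val, MvPowerSeries.monomial_mul_monomial, one_mul, fs_add,
      show (0+1:ℕ) = 1 from rfl, show (1+2:ℕ) = 3 from rfl]

lemma part1 : traceIdeal ↥(R17 k) ↥(I17 k) = m17 k := le_antisymm trace_le trace_ge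

lemma part2 : modLength ↥(R17 k) (↥(R17 k) ⧸ (m17 k : Ideal ↥(R17 k))) = 1 := by
  have hsimple : IsSimpleModule ↥(R17 k) (↥(R17 k) ⧸ (m17 k : Ideal ↥(R17 k))) :=
    isSimpleModule_iff_isCoatom.mpr (Ideal.isMaximal_def.mp m17_isMaximal)
  have hnt : Nontrivial (↥(R17 k) ⧸ (m17 k : Ideal ↥(R17 k))) :=
    Submodule.Quotient.nontrivial_iff.mpr (ne_of_lt (lt_top_iff_ne_top.mpr
      (fun h => one_not_mem_m17 (h ▸ Submodule.mem_top))))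
  rw [modLength]
  apply le_antisymm
  · apply iSup_le
    intro s
    have hlen : s.length ≤ 1 := by
      by_contra hlen
      push_neg at hlen
      have h0 := s.step ⟨0, by omega⟩
      have h1 := s.step ⟨1, by omega⟩
      rcases eq_bot_or_eq_top (s.toFun (⟨0, by omega⟩ : Fin s.length).succ) with hb | ht2
      · rw [hb, Set.mem_setOf_eq] at h0
        exact not_lt_bot h0
      · have e : (⟨1, by omega⟩ : Fin s.length).castSucc = (⟨0, by omega⟩ : Fin s.length).succ := by
          apply Fin.ext
          simp
        rw [e, ht2, Set.mem_setOf_eq] at h1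
        exact not_top_lt h1
    exact_mod_cast hlen
  · have hbt : (⊥ : Submodule ↥(R17 k) (↥(R17 k) ⧸ (m17 k : Ideal ↥(R17 k)))) < ⊤ := by
      obtain ⟨x, y, hxy⟩ := hnt
      have hz : ∃ z : ↥(R17 k) ⧸ (m17 k : Ideal ↥(R17 k)), z ≠ 0 := by
        rcases eq_or_ne x 0 with h | h
        · exact ⟨y, fun hy => hxy (by rw [h, hy])⟩
        · exact ⟨x, h⟩
      obtain ⟨z, hz⟩ := hz
      rw [SetLike.lt_iff_le_and_exists]
      exact ⟨bot_le, z, Submodule.mem_top, fun hm => hz (by simpa using hm)⟩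
    have hle := le_iSup (fun s : RelSeries
        {p : Submodule ↥(R17 k) (↥(R17 k) ⧸ (m17 k : Ideal ↥(R17 k))) × Submodule ↥(R17 k) (↥(R17 k) ⧸ (m17 k : Ideal ↥(R17 k))) | p.1 < p.2} =>
        (s.length : ℕ∞)) ⟨1, ![⊥, ⊤], fun i => by fin_cases i; simpa using hbt⟩
    simpa using hle

end St17

/-- For `R = k[[X, XY, XY², XY³]]` with maximal ideal
`m = (X, XY, XY², XY³)` and `I = (XY, XY²)`, one has `tr_R(I) = m`
(so `ℓ_R(R/tr_R(I)) = 1`), but `h(I) = ∞`. -/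
theorem stmt17 (k : Type*) [Field k] :
    traceIdeal ↥(R17 k) ↥(I17 k) = m17 k ∧
    modLength ↥(R17 k) (↥(R17 k) ⧸ traceIdeal ↥(R17 k) ↥(I17 k)) = 1 ∧
    hInv ↥(R17 k) ↥(I17 k) = ⊤ := by
  refine ⟨St17.part1, ?_, St17.part3⟩
  rw [St17.part1]
  exact St17.part2
end
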